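/- arXiv:1803.09015 — 6 statements merged into one kernel-verified Lean document; each statement's English description precedes it below -/
import Mathlib

section
/- Under the conditional parallel trends assumption (holding for all pairs (g,s) with 2 ≤ g ≤ s ≤ T) and overlap, for every g and t with 2 ≤ g ≤ t ≤ T the group-time average treatment effect is nonparametrically identified by the weighted estimand: ATT(g,t) = E[(G_g/E[G_g] − (p_g(X)C/(1 − p_g(X)))/E[p_g(X)C/(1 − p_g(X))]) (Y_t − Y_{g−1})]. -/
open MeasureTheory ProbabilityTheory
open scoped Classical

/-!
Let `S = {G_g + C = 1}`, on which `C = 1 - G_g`, and let `p` be the propensity score, a version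
of `E_S[G_g | X]`. For every σ(X)-measurable `h`, the defining property of `p`, used once with
`1 - G_g` and once with `G_g`, gives
`E_S[p/(1-p) h C] = E_S[p/(1-p) h (1 - p)] = E_S[h p] = E_S[h G_g]`,
so the weight `p C/(1-p)` makes never-treated units look like cohort `g` as far as functions of `X`
are concerned. With `h = 1` both normalising constants of the estimand equal `E[G_g]`. Conditional
parallel trends gives each untreated increment `Y_s(0) - Y_{s-1}(0)` the same σ(X)-conditional
mean in both groups, so its reweighted control mean equals its cohort-`g` mean; telescoping over
`s = g, …, t` does the same for `Y_t(0) - Y_{g-1}(0)`. Cohort-`g` units are observed with `Y_t(1)`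
and `Y_{g-1}(0)` and never-treated units with `Y(0)`, so the estimand equals
`E[G_g (Y_t(1) - Y_t(0))] / E[G_g] = ATT(g,t)`.
-/

section ZeroOneWeights

variable {Ω : Type*} {m mΩ : MeasurableSpace Ω} {μ P : Measure Ω} {G f : Ω → ℝ}

lemma mul_eq_indicator_of_zero_or_one (hG01 : ∀ ω, G ω = 0 ∨ G ω = 1) (f : Ω → ℝ) :
    (fun ω => G ω * f ω) = {ω | G ω = 1}.indicator f := by
  ext ω
  rcases hG01 ω with h | h <;> simp [h]

lemma MeasureTheory.Integrable.zero_or_one_mul (hf : Integrable f μ) (hG : Measurable G)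
    (hG01 : ∀ ω, G ω = 0 ∨ G ω = 1) : Integrable (fun ω => G ω * f ω) μ :=
  hf.bdd_mul (c := 1) hG.aestronglyMeasurable
    (.of_forall fun ω => by rcases hG01 ω with h | h <;> simp [h])

lemma MeasureTheory.Integrable.mul_zero_or_one (hf : Integrable f μ) (hG : Measurable G)
    (hG01 : ∀ ω, G ω = 0 ∨ G ω = 1) : Integrable (fun ω => f ω * G ω) μ :=
  hf.mul_bdd (c := 1) hG.aestronglyMeasurable
    (.of_forall fun ω => by rcases hG01 ω with h | h <;> simp [h])

lemma integrable_zero_or_one_mul_iff_integrable_cond [IsFiniteMeasure P] (hG : Measurable G)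
    (hG01 : ∀ ω, G ω = 0 ∨ G ω = 1) :
    Integrable (fun ω => G ω * f ω) P ↔ Integrable f P[|{ω | G ω = 1}] := by
  have hE : MeasurableSet {ω | G ω = 1} := hG (measurableSet_singleton 1)
  rw [mul_eq_indicator_of_zero_or_one hG01, integrable_indicator_iff hE, IntegrableOn,
    ProbabilityTheory.cond]
  rcases eq_or_ne (P {ω | G ω = 1}) 0 with h0 | h0
  · simp [Measure.restrict_eq_zero.2 h0]
  · exact (integrable_smul_measure (ENNReal.inv_ne_zero.2 (measure_ne_top _ _))
      (ENNReal.inv_ne_top.2 h0)).symm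

lemma integral_zero_or_one_mul [IsFiniteMeasure P] (hG : Measurable G)
    (hG01 : ∀ ω, G ω = 0 ∨ G ω = 1) (f : Ω → ℝ) :
    ∫ ω, G ω * f ω ∂P = P.real {ω | G ω = 1} * ∫ ω, f ω ∂P[|{ω | G ω = 1}] := by
  have hE : MeasurableSet {ω | G ω = 1} := hG (measurableSet_singleton 1)
  rw [mul_eq_indicator_of_zero_or_one hG01, integral_indicator hE, ProbabilityTheory.cond,
    integral_smul_measure, ENNReal.toReal_inv, smul_eq_mul, ← mul_assoc]
  rcases eq_or_ne (P {ω | G ω = 1}) 0 with h0 | h0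
  · simp [Measure.restrict_eq_zero.2 h0]
  · rw [measureReal_def, mul_inv_cancel₀ (ENNReal.toReal_ne_zero.2 ⟨h0, measure_ne_top _ _⟩),
      one_mul]

lemma integral_cond_eq_integral_zero_or_one_mul_div [IsFiniteMeasure P] (hG : Measurable G)
    (hG01 : ∀ ω, G ω = 0 ∨ G ω = 1) (f : Ω → ℝ) :
    ∫ ω, f ω ∂P[|{ω | G ω = 1}] = (∫ ω, G ω * f ω ∂P) / ∫ ω, G ω ∂P := by
  have hE : MeasurableSet {ω | G ω = 1} := hG (measurableSet_singleton 1)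
  have hG1 : ∫ ω, G ω ∂P = P.real {ω | G ω = 1} := by
    rw [← integral_indicator_one hE, ← mul_eq_indicator_of_zero_or_one hG01 1]
    simp
  rw [integral_zero_or_one_mul hG hG01, hG1]
  rcases eq_or_ne (P {ω | G ω = 1}) 0 with h0 | h0
  · simp [cond_eq_zero_of_meas_eq_zero h0]
  · rw [mul_div_cancel_left₀ _ ((measureReal_ne_zero_iff (measure_ne_top _ _)).2 h0)]

lemma integral_mul_eq_of_ae_eq_condExp [IsFiniteMeasure μ] (hm : m ≤ mΩ) {ψ q : Ω → ℝ}
    (hψ : StronglyMeasurable[m] ψ) (hψf : Integrable (fun ω => ψ ω * f ω) μ)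
    (hf : Integrable f μ) (hq : q =ᵐ[μ] μ[f|m]) :
    ∫ ω, ψ ω * f ω ∂μ = ∫ ω, ψ ω * q ω ∂μ :=
  calc ∫ ω, ψ ω * f ω ∂μ = ∫ ω, μ[fun ω => ψ ω * f ω|m] ω ∂μ := (integral_condExp hm).symm
    _ = ∫ ω, ψ ω * q ω ∂μ := integral_congr_ae <|
      (condExp_mul_of_stronglyMeasurable_left hψ hψf hf).trans
        (hq.mono fun ω hω => by simp [hω])

lemma integral_zero_or_one_mul_eq_of_ae_eq_condExp_cond [IsFiniteMeasure P] (hm : m ≤ mΩ)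
    (hG : Measurable G) (hG01 : ∀ ω, G ω = 0 ∨ G ω = 1) {ψ q : Ω → ℝ}
    (hψ : StronglyMeasurable[m] ψ) (hψf : Integrable (fun ω => G ω * (ψ ω * f ω)) P)
    (hf : Integrable (fun ω => G ω * f ω) P)
    (hq : q =ᵐ[P[|{ω | G ω = 1}]] P[|{ω | G ω = 1}][f|m]) :
    ∫ ω, G ω * (ψ ω * f ω) ∂P = ∫ ω, G ω * (ψ ω * q ω) ∂P := by
  rw [integral_zero_or_one_mul hG hG01, integral_zero_or_one_mul hG hG01 (fun ω => ψ ω * q ω),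
    integral_mul_eq_of_ae_eq_condExp hm hψ
      ((integrable_zero_or_one_mul_iff_integrable_cond hG hG01).1 hψf)
      ((integrable_zero_or_one_mul_iff_integrable_cond hG hG01).1 hf) hq]

end ZeroOneWeights

lemma integral_mul_sub_eq_of_forall_succ {Ω : Type*} [MeasurableSpace Ω] {μ : Measure Ω}
    {w v : Ω → ℝ} {f : ℕ → Ω → ℝ} {a b : ℕ} (hab : a ≤ b)
    (hw : ∀ n, Integrable (fun ω => w ω * f n ω) μ)
    (hv : ∀ n, Integrable (fun ω => v ω * f n ω) μ)
    (hstep : ∀ n, a ≤ n → n < b →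
      ∫ ω, w ω * (f (n + 1) ω - f n ω) ∂μ = ∫ ω, v ω * (f (n + 1) ω - f n ω) ∂μ) :
    ∫ ω, w ω * (f b ω - f a ω) ∂μ = ∫ ω, v ω * (f b ω - f a ω) ∂μ := by
  have hsub : ∀ u : Ω → ℝ, (∀ n, Integrable (fun ω => u ω * f n ω) μ) → ∀ i j,
      ∫ ω, u ω * (f i ω - f j ω) ∂μ = ∫ ω, u ω * f i ω ∂μ - ∫ ω, u ω * f j ω ∂μ :=
    fun u hu i j => by simp_rw [mul_sub]; exact integral_sub (hu i) (hu j)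
  simp only [hsub w hw, hsub v hv] at hstep ⊢
  induction b, hab using Nat.le_induction with
  | base => ring
  | succ n hn ih =>
    have := hstep n hn n.lt_succ_self
    have := ih fun k hk hkn => hstep k hk (by omega)
    linarith

section InversePropensityWeighting

variable {Ω : Type*} {m mΩ : MeasurableSpace Ω} {μ P : Measure Ω} {G C p h f : Ω → ℝ} {ε : ℝ}

lemma abs_div_one_sub_le_inv {x : ℝ} (hε : 0 < ε) (hx0 : 0 ≤ x) (hx : x ≤ 1 - ε) :
    |x / (1 - x)| ≤ ε⁻¹ := by
  have hpos : 0 < 1 - x := by linarith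
  have hone : 1 ≤ ε⁻¹ * (1 - x) := by rw [le_inv_mul_iff₀ hε]; linarith
  rw [abs_of_nonneg (div_nonneg hx0 hpos.le), div_le_iff₀ hpos]
  linarith

lemma MeasureTheory.Integrable.div_one_sub_mul (hf : Integrable f μ)
    (hp : AEStronglyMeasurable p μ) (hε : 0 < ε) (hp_bdd : ∀ᵐ ω ∂μ, 0 ≤ p ω ∧ p ω ≤ 1 - ε) :
    Integrable (fun ω => p ω / (1 - p ω) * f ω) μ :=
  hf.bdd_mul (hp.div₀ (aestronglyMeasurable_const.sub hp))
    (hp_bdd.mono fun _ h => (Real.norm_eq_abs _).trans_le (abs_div_one_sub_le_inv hε h.1 h.2))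

lemma MeasureTheory.Integrable.control_weight_mul (hf : Integrable f μ) (hC : Measurable C)
    (hC01 : ∀ ω, C ω = 0 ∨ C ω = 1) (hp : AEStronglyMeasurable p μ) (hε : 0 < ε)
    (hp_bdd : ∀ᵐ ω ∂μ, 0 ≤ p ω ∧ p ω ≤ 1 - ε) :
    Integrable (fun ω => p ω * C ω / (1 - p ω) * f ω) μ :=
  ((hf.zero_or_one_mul hC hC01).div_one_sub_mul hp hε hp_bdd).congr
    (.of_forall fun ω => by ring)

lemma integral_odds_mul_one_sub_mul_eq [IsFiniteMeasure μ] (hm : m ≤ mΩ) (hε : 0 < ε)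
    (hG : Measurable G) (hG01 : ∀ ω, G ω = 0 ∨ G ω = 1) (hp : StronglyMeasurable[m] p)
    (hpG : p =ᵐ[μ] μ[G|m]) (hp_bdd : ∀ᵐ ω ∂μ, 0 ≤ p ω ∧ p ω ≤ 1 - ε)
    (hh : StronglyMeasurable[m] h) (hhi : Integrable h μ) :
    ∫ ω, p ω * (1 - G ω) / (1 - p ω) * h ω ∂μ = ∫ ω, G ω * h ω ∂μ := by
  have hGi : Integrable G μ := by
    simpa using (integrable_const (1 : ℝ)).zero_or_one_mul hG hG01
  have hφ : StronglyMeasurable[m] (fun ω => p ω / (1 - p ω) * h ω) :=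
    ((hp.measurable.div (measurable_const.sub hp.measurable)).mul hh.measurable).stronglyMeasurable
  have hφi : Integrable (fun ω => p ω / (1 - p ω) * h ω) μ :=
    hhi.div_one_sub_mul (hp.mono hm).aestronglyMeasurable hε hp_bdd
  have hq : (fun ω => 1 - p ω) =ᵐ[μ] μ[fun ω => 1 - G ω|m] := by
    have hsub := condExp_sub (integrable_const (1 : ℝ)) hGi m
    rw [condExp_const hm] at hsub
    filter_upwards [hsub, hpG] with ω h1 h2
    exact (congrArg (1 - ·) h2).trans h1.symm
  calc ∫ ω, p ω * (1 - G ω) / (1 - p ω) * h ω ∂μ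
      = ∫ ω, p ω / (1 - p ω) * h ω * (1 - G ω) ∂μ := by congr 1; ext ω; ring
    _ = ∫ ω, p ω / (1 - p ω) * h ω * (1 - p ω) ∂μ :=
        integral_mul_eq_of_ae_eq_condExp hm hφ
          (hφi.mul_zero_or_one (hG.const_sub 1)
            fun ω => by rcases hG01 ω with h | h <;> simp [h])
          ((integrable_const 1).sub hGi) hq
    _ = ∫ ω, h ω * p ω ∂μ := integral_congr_ae <| hp_bdd.mono fun ω hω => by
        have : 1 - p ω ≠ 0 := by linarith
        field_simp
    _ = ∫ ω, G ω * h ω ∂μ := by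
        rw [← integral_mul_eq_of_ae_eq_condExp hm hh
          (hhi.mul_zero_or_one hG hG01) hGi hpG]
        simp only [mul_comm]

lemma integral_control_weight_mul_eq [IsFiniteMeasure P] (hm : m ≤ mΩ) (hε : 0 < ε)
    (hG : Measurable G) (hC : Measurable C) (hG01 : ∀ ω, G ω = 0 ∨ G ω = 1)
    (hC01 : ∀ ω, C ω = 0 ∨ C ω = 1) (hGC : ∀ ω, G ω = 1 → C ω = 0)
    (hp : StronglyMeasurable[m] p)
    (hpG : p =ᵐ[P[|{ω | G ω + C ω = 1}]] P[|{ω | G ω + C ω = 1}][G|m])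
    (hp_bdd : ∀ᵐ ω ∂P, 0 ≤ p ω ∧ p ω ≤ 1 - ε) (hh : StronglyMeasurable[m] h)
    (hGh : Integrable (fun ω => G ω * h ω) P) (hCh : Integrable (fun ω => C ω * h ω) P) :
    ∫ ω, p ω * C ω / (1 - p ω) * h ω ∂P = ∫ ω, G ω * h ω ∂P := by
  have hS : Measurable (fun ω => G ω + C ω) := hG.add hC
  have hS01 : ∀ ω, G ω + C ω = 0 ∨ G ω + C ω = 1 := fun ω => by
    rcases hG01 ω with h | h
    · simpa [h] using hC01 ω
    · simp [h, hGC ω h]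
  have hhS : Integrable h P[|{ω | G ω + C ω = 1}] :=
    (integrable_zero_or_one_mul_iff_integrable_cond hS hS01).1
      (by simpa only [add_mul] using hGh.fun_add hCh)
  calc ∫ ω, p ω * C ω / (1 - p ω) * h ω ∂P
      = ∫ ω, (G ω + C ω) * (p ω * (1 - G ω) / (1 - p ω) * h ω) ∂P := by
        congr 1; ext ω
        rcases hG01 ω with hGω | hGω
        · simp [hGω]; ring
        · simp [hGω, hGC ω hGω]
    _ = ∫ ω, (G ω + C ω) * (G ω * h ω) ∂P := by
        rw [integral_zero_or_one_mul hS hS01, integral_zero_or_one_mul hS hS01,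
          integral_odds_mul_one_sub_mul_eq hm hε hG hG01 hp hpG
            (cond_absolutelyContinuous.ae_le hp_bdd) hh hhS]
    _ = ∫ ω, G ω * h ω ∂P := by
        congr 1; ext ω
        rcases hG01 ω with hGω | hGω <;> simp [hGω, hGC]

lemma integral_control_weight_mul_eq_of_condExp_eq [IsFiniteMeasure P] (hm : m ≤ mΩ)
    (hε : 0 < ε) (hG : Measurable G) (hC : Measurable C) (hG01 : ∀ ω, G ω = 0 ∨ G ω = 1)
    (hC01 : ∀ ω, C ω = 0 ∨ C ω = 1) (hGC : ∀ ω, G ω = 1 → C ω = 0)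
    (hp : StronglyMeasurable[m] p)
    (hpG : p =ᵐ[P[|{ω | G ω + C ω = 1}]] P[|{ω | G ω + C ω = 1}][G|m])
    (hp_bdd : ∀ᵐ ω ∂P, 0 ≤ p ω ∧ p ω ≤ 1 - ε) {Δ q : Ω → ℝ} (hΔ : Integrable Δ P)
    (hq : StronglyMeasurable[m] q) (hqG : q =ᵐ[P[|{ω | G ω = 1}]] P[|{ω | G ω = 1}][Δ|m])
    (hqC : q =ᵐ[P[|{ω | C ω = 1}]] P[|{ω | C ω = 1}][Δ|m]) :
    ∫ ω, p ω * C ω / (1 - p ω) * Δ ω ∂P = ∫ ω, G ω * Δ ω ∂P := by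
  have hodds : StronglyMeasurable[m] (fun ω => p ω / (1 - p ω)) :=
    (hp.measurable.div (measurable_const.sub hp.measurable)).stronglyMeasurable
  have hqGi : Integrable (fun ω => G ω * q ω) P :=
    (integrable_zero_or_one_mul_iff_integrable_cond hG hG01).2 (integrable_condExp.congr hqG.symm)
  have hqCi : Integrable (fun ω => C ω * q ω) P :=
    (integrable_zero_or_one_mul_iff_integrable_cond hC hC01).2 (integrable_condExp.congr hqC.symm)
  have hreweight := integral_control_weight_mul_eq hm hε hG hC hG01 hC01 hGC hp hpG hp_bdd hq
    hqGi hqCi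
  have hcontrol_trend := integral_zero_or_one_mul_eq_of_ae_eq_condExp_cond hm hC hC01 hodds
    ((hΔ.div_one_sub_mul (hp.mono hm).aestronglyMeasurable hε hp_bdd).zero_or_one_mul hC hC01)
    (hΔ.zero_or_one_mul hC hC01) hqC
  have hcohort_trend := integral_zero_or_one_mul_eq_of_ae_eq_condExp_cond hm hG hG01
    (ψ := fun _ => 1) stronglyMeasurable_const (by simpa using hΔ.zero_or_one_mul hG hG01)
    (hΔ.zero_or_one_mul hG hG01) hqG
  simp only [one_mul] at hcohort_trend
  calc ∫ ω, p ω * C ω / (1 - p ω) * Δ ω ∂P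
      = ∫ ω, C ω * (p ω / (1 - p ω) * Δ ω) ∂P := by congr 1; ext ω; ring
    _ = ∫ ω, p ω * C ω / (1 - p ω) * q ω ∂P := by rw [hcontrol_trend]; congr 1; ext ω; ring
    _ = ∫ ω, G ω * Δ ω ∂P := by rw [hreweight, hcohort_trend]

lemma integral_control_weight_mul_sub_eq_of_condExp_eq [IsFiniteMeasure P] (hm : m ≤ mΩ)
    (hε : 0 < ε) (hG : Measurable G) (hC : Measurable C) (hG01 : ∀ ω, G ω = 0 ∨ G ω = 1)
    (hC01 : ∀ ω, C ω = 0 ∨ C ω = 1) (hGC : ∀ ω, G ω = 1 → C ω = 0)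
    (hp : StronglyMeasurable[m] p)
    (hpG : p =ᵐ[P[|{ω | G ω + C ω = 1}]] P[|{ω | G ω + C ω = 1}][G|m])
    (hp_bdd : ∀ᵐ ω ∂P, 0 ≤ p ω ∧ p ω ≤ 1 - ε) {Y : ℕ → Ω → ℝ} (hY : ∀ n, Integrable (Y n) P)
    {a b : ℕ} (hab : a ≤ b)
    (htrend : ∀ n, a ≤ n → n < b → ∃ q : Ω → ℝ, StronglyMeasurable[m] q ∧
      q =ᵐ[P[|{ω | G ω = 1}]] P[|{ω | G ω = 1}][fun ω => Y (n + 1) ω - Y n ω|m] ∧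
      q =ᵐ[P[|{ω | C ω = 1}]] P[|{ω | C ω = 1}][fun ω => Y (n + 1) ω - Y n ω|m]) :
    ∫ ω, p ω * C ω / (1 - p ω) * (Y b ω - Y a ω) ∂P = ∫ ω, G ω * (Y b ω - Y a ω) ∂P := by
  refine integral_mul_sub_eq_of_forall_succ hab
    (fun n => (hY n).control_weight_mul hC hC01 (hp.mono hm).aestronglyMeasurable hε hp_bdd)
    (fun n => (hY n).zero_or_one_mul hG hG01) fun n han hnb => ?_
  obtain ⟨q, hq, hqG, hqC⟩ := htrend n han hnb
  exact integral_control_weight_mul_eq_of_condExp_eq hm hε hG hC hG01 hC01 hGC hp hpG hp_bdd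
    ((hY (n + 1)).sub (hY n)) hq hqG hqC

end InversePropensityWeighting

lemma eq_zero_of_sum_add_eq_one {ι : Type*} {s : Finset ι} {a : ι → ℝ} {b : ℝ}
    (ha : ∀ i ∈ s, 0 ≤ a i) (hb : 0 ≤ b) (h : ∑ i ∈ s, a i + b = 1) {i : ι} (hi : i ∈ s)
    (hai : a i = 1) : b = 0 ∧ ∀ j ∈ s, j ≠ i → a j = 0 := by
  rw [← Finset.add_sum_erase s a hi, hai] at h
  have hrest : 0 ≤ ∑ j ∈ s.erase i, a j :=
    Finset.sum_nonneg fun j hj => ha j (Finset.mem_of_mem_erase hj)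
  have hzero : ∑ j ∈ s.erase i, a j = 0 := by linarith
  refine ⟨by linarith, fun j hj hji => ?_⟩
  exact (Finset.sum_eq_zero_iff_of_nonneg fun j hj => ha j (Finset.mem_of_mem_erase hj)).1
    hzero j (Finset.mem_erase.2 ⟨hji, hj⟩)

section StaggeredAdoption

variable {Ω : Type*} {T g s : ℕ} {G : ℕ → Ω → ℝ} {C : Ω → ℝ} {Y0 Y1 Y : ℕ → Ω → ℝ} {ω : Ω}

lemma eq_zero_of_cohort_eq_one (hG01 : ∀ g ω, G g ω = 0 ∨ G g ω = 1)
    (hC01 : ∀ ω, C ω = 0 ∨ C ω = 1) (hsum : ∀ ω, (∑ g ∈ Finset.Icc 2 T, G g ω) + C ω = 1)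
    (hg : g ∈ Finset.Icc 2 T) (h : G g ω = 1) :
    C ω = 0 ∧ ∀ g' ∈ Finset.Icc 2 T, g' ≠ g → G g' ω = 0 :=
  eq_zero_of_sum_add_eq_one (fun g' _ => by rcases hG01 g' ω with h | h <;> simp [h])
    (by rcases hC01 ω with h | h <;> simp [h]) (hsum ω) hg h

lemma cohort_eq_zero_of_control_eq_one (hG01 : ∀ g ω, G g ω = 0 ∨ G g ω = 1)
    (hsum : ∀ ω, (∑ g ∈ Finset.Icc 2 T, G g ω) + C ω = 1) (h : C ω = 1)
    (hg : g ∈ Finset.Icc 2 T) : G g ω = 0 := by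
  have hnonneg : ∀ g' ∈ Finset.Icc 2 T, 0 ≤ G g' ω := fun g' _ => by
    rcases hG01 g' ω with h | h <;> simp [h]
  exact (Finset.sum_eq_zero_iff_of_nonneg hnonneg).1 (by linarith [hsum ω]) g hg

lemma observed_eq_treated
    (hobs : ∀ s ω, Y s ω =
      if ∃ g', 2 ≤ g' ∧ g' ≤ s ∧ G g' ω = 1 then Y1 s ω else Y0 s ω)
    (hg : 2 ≤ g) (hgs : g ≤ s) (h : G g ω = 1) : Y s ω = Y1 s ω := by
  rw [hobs, if_pos ⟨g, hg, hgs, h⟩]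

lemma observed_eq_untreated
    (hobs : ∀ s ω, Y s ω =
      if ∃ g', 2 ≤ g' ∧ g' ≤ s ∧ G g' ω = 1 then Y1 s ω else Y0 s ω)
    (h : ∀ g', 2 ≤ g' → g' ≤ s → G g' ω = 0) : Y s ω = Y0 s ω := by
  rw [hobs, if_neg]
  rintro ⟨g', hg', hg's, h1⟩
  simp [h g' hg' hg's] at h1

lemma cohort_mul_observed_trend (hG01 : ∀ g ω, G g ω = 0 ∨ G g ω = 1)
    (hC01 : ∀ ω, C ω = 0 ∨ C ω = 1) (hsum : ∀ ω, (∑ g ∈ Finset.Icc 2 T, G g ω) + C ω = 1)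
    (hobs : ∀ s ω, Y s ω =
      if ∃ g', 2 ≤ g' ∧ g' ≤ s ∧ G g' ω = 1 then Y1 s ω else Y0 s ω)
    (hg : 2 ≤ g) (hgs : g ≤ s) (hgT : g ≤ T) (ω : Ω) :
    G g ω * (Y s ω - Y (g - 1) ω) = G g ω * (Y1 s ω - Y0 (g - 1) ω) := by
  rcases hG01 g ω with h | h
  · simp [h]
  have hothers := (eq_zero_of_cohort_eq_one hG01 hC01 hsum (Finset.mem_Icc.2 ⟨hg, hgT⟩) h).2
  rw [observed_eq_treated hobs hg hgs h, observed_eq_untreated hobs fun g' hg' hg'g =>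
    hothers g' (Finset.mem_Icc.2 ⟨hg', by omega⟩) (by omega)]

lemma control_mul_observed_trend (hG01 : ∀ g ω, G g ω = 0 ∨ G g ω = 1)
    (hC01 : ∀ ω, C ω = 0 ∨ C ω = 1) (hsum : ∀ ω, (∑ g ∈ Finset.Icc 2 T, G g ω) + C ω = 1)
    (hobs : ∀ s ω, Y s ω =
      if ∃ g', 2 ≤ g' ∧ g' ≤ s ∧ G g' ω = 1 then Y1 s ω else Y0 s ω)
    {r : ℕ} (hsT : s ≤ T) (hrT : r ≤ T) (ω : Ω) :
    C ω * (Y s ω - Y r ω) = C ω * (Y0 s ω - Y0 r ω) := by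
  rcases hC01 ω with h | h
  · simp [h]
  have huntreated : ∀ {u}, u ≤ T → Y u ω = Y0 u ω := fun huT =>
    observed_eq_untreated hobs fun g' hg' hg'u =>
      cohort_eq_zero_of_control_eq_one hG01 hsum h (Finset.mem_Icc.2 ⟨hg', hg'u.trans huT⟩)
  rw [huntreated hsT, huntreated hrT]

lemma weighted_observed_trend_eq (hG01 : ∀ g ω, G g ω = 0 ∨ G g ω = 1)
    (hC01 : ∀ ω, C ω = 0 ∨ C ω = 1) (hsum : ∀ ω, (∑ g ∈ Finset.Icc 2 T, G g ω) + C ω = 1)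
    (hobs : ∀ s ω, Y s ω =
      if ∃ g', 2 ≤ g' ∧ g' ≤ s ∧ G g' ω = 1 then Y1 s ω else Y0 s ω)
    {t : ℕ} (hg : 2 ≤ g) (hgt : g ≤ t) (htT : t ≤ T) (p : Ω → ℝ) (a : ℝ) (ω : Ω) :
    (G g ω / a - p ω * C ω / (1 - p ω) / a) * (Y t ω - Y (g - 1) ω)
      = (G g ω * (Y1 t ω - Y0 (g - 1) ω)
          - p ω * C ω / (1 - p ω) * (Y0 t ω - Y0 (g - 1) ω)) / a := by
  rw [← cohort_mul_observed_trend hG01 hC01 hsum hobs hg hgt (hgt.trans htT),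
    show p ω * C ω / (1 - p ω) * (Y0 t ω - Y0 (g - 1) ω)
      = p ω / (1 - p ω) * (C ω * (Y0 t ω - Y0 (g - 1) ω)) by ring,
    ← control_mul_observed_trend hG01 hC01 hsum hobs htT (by omega)]
  ring

end StaggeredAdoption

theorem att_gt_nonparametric_identification_general
    {Ω : Type*} [MeasurableSpace Ω] (P : Measure Ω) [IsProbabilityMeasure P]
    (k T : ℕ)
    -- potential outcomes, observed outcomes, covariates, group/control indicators
    (Y0 Y1 Y : ℕ → Ω → ℝ) (X : Ω → (Fin k → ℝ)) (G : ℕ → Ω → ℝ) (C : Ω → ℝ)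
    -- measurability and integrability
    (hY0int : ∀ s, Integrable (Y0 s) P) (hY1int : ∀ s, Integrable (Y1 s) P)
    (hXmeas : Measurable X) (hGmeas : ∀ g, Measurable (G g)) (hCmeas : Measurable C)
    -- indicator structure
    (hG01 : ∀ g ω, G g ω = 0 ∨ G g ω = 1)
    (hC01 : ∀ ω, C ω = 0 ∨ C ω = 1)
    (hsum : ∀ ω, (∑ g ∈ Finset.Icc 2 T, G g ω) + C ω = 1)
    -- observed outcomes
    (hobs : ∀ s ω, Y s ω =
      if ∃ g', 2 ≤ g' ∧ g' ≤ s ∧ G g' ω = 1 then Y1 s ω else Y0 s ω)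
    -- generalized propensity scores: σ(X)-measurable versions of E[G_g | X, G_g + C = 1]
    (p : ℕ → Ω → ℝ)
    (hpmeas : ∀ g, Measurable[MeasurableSpace.comap X inferInstance] (p g))
    (hpver : ∀ g, 2 ≤ g → g ≤ T →
      p g =ᵐ[P[|{ω | G g ω + C ω = 1}]]
        (P[|{ω | G g ω + C ω = 1}])[G g | MeasurableSpace.comap X inferInstance])
    -- overlap
    (ε : ℝ) (hε : 0 < ε)
    (hoverlap : ∀ g, 2 ≤ g → g ≤ T → ∀ᵐ ω ∂P, 0 ≤ p g ω ∧ p g ω ≤ 1 - ε)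
    -- conditional parallel trends for all pairs (g, s) with 2 ≤ g ≤ s ≤ T
    (hCPT : ∀ g s, 2 ≤ g → g ≤ s → s ≤ T →
      ∃ m : (Fin k → ℝ) → ℝ, Measurable m ∧
        (fun ω => m (X ω)) =ᵐ[P[|{ω | G g ω = 1}]]
          (P[|{ω | G g ω = 1}])[fun ω => Y0 s ω - Y0 (s - 1) ω |
            MeasurableSpace.comap X inferInstance] ∧
        (fun ω => m (X ω)) =ᵐ[P[|{ω | C ω = 1}]]
          (P[|{ω | C ω = 1}])[fun ω => Y0 s ω - Y0 (s - 1) ω |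
            MeasurableSpace.comap X inferInstance])
    -- the pair (g, t) under consideration, 2 ≤ g ≤ t ≤ T
    (g t : ℕ) (hg : 2 ≤ g) (hgt : g ≤ t) (htT : t ≤ T) :
    -- conclusion: ATT(g,t) is identified by the weighted estimand
    ∫ ω, (Y1 t ω - Y0 t ω) ∂(P[|{ω | G g ω = 1}]) =
      ∫ ω,
        (G g ω / (∫ ω', G g ω' ∂P) -
          (p g ω * C ω / (1 - p g ω)) / (∫ ω', p g ω' * C ω' / (1 - p g ω') ∂P)) *
        (Y t ω - Y (g - 1) ω) ∂P := by
  have hgT : g ≤ T := hgt.trans htT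
  have hm := hXmeas.comap_le
  have hp := (hpmeas g).stronglyMeasurable
  have hGC : ∀ ω, G g ω = 1 → C ω = 0 := fun ω h =>
    (eq_zero_of_cohort_eq_one hG01 hC01 hsum (Finset.mem_Icc.2 ⟨hg, hgT⟩) h).1
  have hnorm : ∫ ω, p g ω * C ω / (1 - p g ω) ∂P = ∫ ω, G g ω ∂P := by
    simpa using integral_control_weight_mul_eq hm hε (hGmeas g) hCmeas (hG01 g) hC01 hGC hp
      (hpver g hg hgT) (hoverlap g hg hgT) stronglyMeasurable_const
      ((integrable_const 1).zero_or_one_mul (hGmeas g) (hG01 g))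
      ((integrable_const 1).zero_or_one_mul hCmeas hC01)
  have htrend : ∫ ω, p g ω * C ω / (1 - p g ω) * (Y0 t ω - Y0 (g - 1) ω) ∂P
      = ∫ ω, G g ω * (Y0 t ω - Y0 (g - 1) ω) ∂P := by
    refine integral_control_weight_mul_sub_eq_of_condExp_eq hm hε (hGmeas g) hCmeas (hG01 g) hC01
      hGC hp (hpver g hg hgT) (hoverlap g hg hgT) hY0int (by omega) fun n hn hnt => ?_
    obtain ⟨mean, hmean, hmeanG, hmeanC⟩ := hCPT g (n + 1) hg (by omega) (by omega)
    rw [Nat.add_sub_cancel] at hmeanG hmeanC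
    exact ⟨_, (hmean.comp (comap_measurable X)).stronglyMeasurable, hmeanG, hmeanC⟩
  have hΔ0 : Integrable (fun ω => Y0 t ω - Y0 (g - 1) ω) P := (hY0int t).sub (hY0int _)
  have hΔ1 : Integrable (fun ω => G g ω * (Y1 t ω - Y0 (g - 1) ω)) P :=
    ((hY1int t).sub (hY0int _)).zero_or_one_mul (hGmeas g) (hG01 g)
  rw [integral_cond_eq_integral_zero_or_one_mul_div (hGmeas g) (hG01 g), hnorm]
  symm
  calc _ = ∫ ω, (G g ω * (Y1 t ω - Y0 (g - 1) ω)
          - p g ω * C ω / (1 - p g ω) * (Y0 t ω - Y0 (g - 1) ω)) / ∫ ω', G g ω' ∂P ∂P :=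
        integral_congr_ae <| .of_forall <|
          weighted_observed_trend_eq hG01 hC01 hsum hobs hg hgt htT _ _
    _ = (∫ ω, G g ω * (Y1 t ω - Y0 (g - 1) ω) ∂P
          - ∫ ω, G g ω * (Y0 t ω - Y0 (g - 1) ω) ∂P) / ∫ ω', G g ω' ∂P := by
        rw [integral_div, integral_sub hΔ1 (hΔ0.control_weight_mul hCmeas hC01
          (hp.mono hm).aestronglyMeasurable hε (hoverlap g hg hgT)), htrend]
    _ = _ := by
        rw [← integral_sub hΔ1 (hΔ0.zero_or_one_mul (hGmeas g) (hG01 g))]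
        congr 2; ext ω; ring

/-- Theorem 1 of Callaway & Sant'Anna: nonparametric identification
of the group-time average treatment effect.  Under the conditional parallel trends
assumption (for all pairs `(g,s)` with `2 ≤ g ≤ s ≤ T`) and overlap, for every
`2 ≤ g ≤ t ≤ T`,
`ATT(g,t) = E[(G_g/E[G_g] − (p_g(X)C/(1−p_g(X)))/E[p_g(X)C/(1−p_g(X))])(Y_t − Y_{g−1})]`. -/
theorem att_gt_nonparametric_identification
    {Ω : Type*} [MeasurableSpace Ω] (P : Measure Ω) [IsProbabilityMeasure P]
    (k T : ℕ) (hT : 2 ≤ T)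
    -- potential outcomes, observed outcomes, covariates, group/control indicators
    (Y0 Y1 Y : ℕ → Ω → ℝ) (X : Ω → (Fin k → ℝ)) (G : ℕ → Ω → ℝ) (C : Ω → ℝ)
    -- measurability and integrability
    (hY0meas : ∀ s, Measurable (Y0 s)) (hY1meas : ∀ s, Measurable (Y1 s))
    (hY0int : ∀ s, Integrable (Y0 s) P) (hY1int : ∀ s, Integrable (Y1 s) P)
    (hXmeas : Measurable X) (hGmeas : ∀ g, Measurable (G g)) (hCmeas : Measurable C)
    -- indicator structure
    (hG01 : ∀ g ω, G g ω = 0 ∨ G g ω = 1)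
    (hC01 : ∀ ω, C ω = 0 ∨ C ω = 1)
    (hsum : ∀ ω, (∑ g ∈ Finset.Icc 2 T, G g ω) + C ω = 1)
    -- observed outcomes
    (hobs : ∀ s ω, Y s ω =
      if ∃ g', 2 ≤ g' ∧ g' ≤ s ∧ G g' ω = 1 then Y1 s ω else Y0 s ω)
    -- generalized propensity scores: σ(X)-measurable versions of E[G_g | X, G_g + C = 1]
    (p : ℕ → Ω → ℝ)
    (hpmeas : ∀ g, Measurable[MeasurableSpace.comap X inferInstance] (p g))
    (hpver : ∀ g, 2 ≤ g → g ≤ T →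
      p g =ᵐ[P[|{ω | G g ω + C ω = 1}]]
        (P[|{ω | G g ω + C ω = 1}])[G g | MeasurableSpace.comap X inferInstance])
    -- overlap
    (hPg : ∀ g, 2 ≤ g → g ≤ T → 0 < P {ω | G g ω = 1})
    (hPC : 0 < P {ω | C ω = 1})
    (ε : ℝ) (hε : 0 < ε)
    (hoverlap : ∀ g, 2 ≤ g → g ≤ T → ∀ᵐ ω ∂P, 0 ≤ p g ω ∧ p g ω ≤ 1 - ε)
    -- conditional parallel trends for all pairs (g, s) with 2 ≤ g ≤ s ≤ T
    (hCPT : ∀ g s, 2 ≤ g → g ≤ s → s ≤ T →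
      ∃ m : (Fin k → ℝ) → ℝ, Measurable m ∧
        (fun ω => m (X ω)) =ᵐ[P[|{ω | G g ω = 1}]]
          (P[|{ω | G g ω = 1}])[fun ω => Y0 s ω - Y0 (s - 1) ω |
            MeasurableSpace.comap X inferInstance] ∧
        (fun ω => m (X ω)) =ᵐ[P[|{ω | C ω = 1}]]
          (P[|{ω | C ω = 1}])[fun ω => Y0 s ω - Y0 (s - 1) ω |
            MeasurableSpace.comap X inferInstance])
    -- the pair (g, t) under consideration, 2 ≤ g ≤ t ≤ T
    (g t : ℕ) (hg : 2 ≤ g) (hgt : g ≤ t) (htT : t ≤ T) :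
    -- conclusion: ATT(g,t) is identified by the weighted estimand
    ∫ ω, (Y1 t ω - Y0 t ω) ∂(P[|{ω | G g ω = 1}]) =
      ∫ ω,
        (G g ω / (∫ ω', G g ω' ∂P) -
          (p g ω * C ω / (1 - p g ω)) / (∫ ω', p g ω' * C ω' / (1 - p g ω') ∂P)) *
        (Y t ω - Y (g - 1) ω) ∂P :=
  att_gt_nonparametric_identification_general P k T Y0 Y1 Y X G C hY0int hY1int hXmeas hGmeas hCmeas
    hG01 hC01 hsum hobs p hpmeas hpver ε hε hoverlap hCPT g t hg hgt htT
end

section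
/- If the unconditional parallel trends assumption holds for group g in all periods s with g ≤ s ≤ t (that is, E[Y_s(0) − Y_{s−1}(0) | G_g = 1] = E[Y_s(0) − Y_{s−1}(0) | C = 1] for every such s), and P(G_g = 1) > 0, P(C = 1) > 0, then for 2 ≤ g ≤ t ≤ T the group-time average treatment effect satisfies ATT(g,t) = E[Y_t − Y_{g−1} | G_g = 1] − E[Y_t − Y_{g−1} | C = 1]. -/
open MeasureTheory ProbabilityTheory
open scoped Classical

/-! Inside cohort `g`, the observed outcome is `Y1` from period `g` on and `Y0` before it; inside
the control group it is always `Y0`. The difference-in-differences therefore equals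
`ATT(g,t)` plus the gap `E[Y0_t − Y0_{g−1} | G_g = 1] − E[Y0_t − Y0_{g−1} | C = 1]`, and this gap
vanishes because it telescopes into the one-period gaps that parallel trends sets to zero. -/

theorem Finset.eq_zero_of_sum_add_eq_one_of_right_eq_one {ι : Type*} {s : Finset ι}
    {x : ι → ℝ} {c : ℝ} (hx : ∀ i ∈ s, 0 ≤ x i) (h : ∑ i ∈ s, x i + c = 1) (hc : c = 1) :
    ∀ i ∈ s, x i = 0 :=
  (Finset.sum_eq_zero_iff_of_nonneg hx).mp (by linarith)

theorem Finset.eq_zero_of_sum_add_eq_one_of_eq_one {ι : Type*} {s : Finset ι}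
    {x : ι → ℝ} {c : ℝ} (hx : ∀ i ∈ s, 0 ≤ x i) (hc : 0 ≤ c) (h : ∑ i ∈ s, x i + c = 1)
    {i j : ι} (hi : i ∈ s) (hj : j ∈ s) (hji : j ≠ i) (hxi : x i = 1) : x j = 0 := by
  rw [← s.add_sum_erase x hi, hxi] at h
  have hx' : ∀ k ∈ s.erase i, 0 ≤ x k := fun k hk => hx k (Finset.mem_of_mem_erase hk)
  have hrest : ∑ k ∈ s.erase i, x k = 0 := by linarith [Finset.sum_nonneg hx']
  exact (Finset.sum_eq_zero_iff_of_nonneg hx').mp hrest j (Finset.mem_erase.mpr ⟨hji, hj⟩)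

theorem eq_of_forall_eq_sub_one {α : Type*} (f : ℕ → α) {a b : ℕ} (hab : a ≤ b)
    (h : ∀ s, a < s → s ≤ b → f s = f (s - 1)) : f b = f a := by
  induction b, hab using Nat.le_induction with
  | base => rfl
  | succ n han ih =>
    rw [h (n + 1) (by omega) le_rfl, Nat.add_sub_cancel, ih fun s hs hsn => h s hs (by omega)]

namespace ProbabilityTheory

variable {Ω : Type*} [MeasurableSpace Ω] {μ : Measure Ω} {s : Set Ω}

theorem integrable_cond {f : Ω → ℝ} (hf : Integrable f μ) : Integrable f μ[|s] := by
  by_cases hs : μ s = 0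
  · simp [cond_eq_zero_of_meas_eq_zero hs]
  · exact hf.restrict.smul_measure (ENNReal.inv_ne_top.mpr hs)

theorem integral_cond_congr (hs : MeasurableSet s) {f f' : Ω → ℝ} (h : ∀ ω ∈ s, f ω = f' ω) :
    ∫ ω, f ω ∂μ[|s] = ∫ ω, f' ω ∂μ[|s] :=
  integral_congr_ae ((ae_cond_mem hs).mono h)

end ProbabilityTheory

section StaggeredAdoption

variable {Ω : Type*} {T : ℕ} {G : ℕ → Ω → ℝ} {C : Ω → ℝ} {Y0 Y1 Y : ℕ → Ω → ℝ} {ω : Ω}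

theorem obs_eq_treated_of_cohort_le
    (hobs : ∀ s ω, Y s ω = if ∃ g', 2 ≤ g' ∧ g' ≤ s ∧ G g' ω = 1 then Y1 s ω else Y0 s ω)
    {g s : ℕ} (hg : 2 ≤ g) (hgs : g ≤ s) (hω : G g ω = 1) : Y s ω = Y1 s ω := by
  rw [hobs, if_pos ⟨g, hg, hgs, hω⟩]

theorem obs_eq_untreated_of_lt_cohort (hG : ∀ g ω, 0 ≤ G g ω) (hC : ∀ ω, 0 ≤ C ω)
    (hsum : ∀ ω, (∑ g ∈ Finset.Icc 2 T, G g ω) + C ω = 1)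
    (hobs : ∀ s ω, Y s ω = if ∃ g', 2 ≤ g' ∧ g' ≤ s ∧ G g' ω = 1 then Y1 s ω else Y0 s ω)
    {g s : ℕ} (hg : 2 ≤ g) (hgT : g ≤ T) (hsg : s < g) (hω : G g ω = 1) : Y s ω = Y0 s ω := by
  rw [hobs, if_neg]
  rintro ⟨g', hg', hg's, hω'⟩
  have := Finset.eq_zero_of_sum_add_eq_one_of_eq_one (fun i _ => hG i ω) (hC ω) (hsum ω)
    (Finset.mem_Icc.mpr ⟨hg, hgT⟩) (Finset.mem_Icc.mpr ⟨hg', by omega⟩) (by omega) hω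
  linarith

theorem obs_eq_untreated_of_control (hG : ∀ g ω, 0 ≤ G g ω)
    (hsum : ∀ ω, (∑ g ∈ Finset.Icc 2 T, G g ω) + C ω = 1)
    (hobs : ∀ s ω, Y s ω = if ∃ g', 2 ≤ g' ∧ g' ≤ s ∧ G g' ω = 1 then Y1 s ω else Y0 s ω)
    {s : ℕ} (hsT : s ≤ T) (hω : C ω = 1) : Y s ω = Y0 s ω := by
  rw [hobs, if_neg]
  rintro ⟨g', hg', hg's, hω'⟩
  have := Finset.eq_zero_of_sum_add_eq_one_of_right_eq_one (fun i _ => hG i ω) (hsum ω) hω g'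
    (Finset.mem_Icc.mpr ⟨hg', by omega⟩)
  linarith

end StaggeredAdoption

theorem att_identification_unconditional_general
    {Ω : Type*} [MeasurableSpace Ω] (P : Measure Ω)
    (T : ℕ)
    -- potential outcomes, observed outcomes, group indicators, control indicator
    (Y0 Y1 Y : ℕ → Ω → ℝ) (G : ℕ → Ω → ℝ) (C : Ω → ℝ)
    -- measurability and integrability
    (hY0int : ∀ t, Integrable (Y0 t) P) (hY1int : ∀ t, Integrable (Y1 t) P)
    (hGmeas : ∀ g, Measurable (G g)) (hCmeas : Measurable C)
    -- indicator structure: the `G g`'s and `C` are {0,1}-valued and exactly one is one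
    (hG01 : ∀ g ω, G g ω = 0 ∨ G g ω = 1)
    (hC01 : ∀ ω, C ω = 0 ∨ C ω = 1)
    (hsum : ∀ ω, (∑ g ∈ Finset.Icc 2 T, G g ω) + C ω = 1)
    -- observed outcomes
    (hobs : ∀ s ω, Y s ω =
      if ∃ g', 2 ≤ g' ∧ g' ≤ s ∧ G g' ω = 1 then Y1 s ω else Y0 s ω)
    -- the pair (g, t) under consideration
    (g t : ℕ) (hg : 2 ≤ g) (hgt : g ≤ t) (htT : t ≤ T)
    -- unconditional parallel trends for group g in all periods g ≤ s ≤ t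
    (hPT : ∀ s, g ≤ s → s ≤ t →
      ∫ ω, (Y0 s ω - Y0 (s - 1) ω) ∂(P[|{ω | G g ω = 1}]) =
      ∫ ω, (Y0 s ω - Y0 (s - 1) ω) ∂(P[|{ω | C ω = 1}])) :
    -- conclusion: ATT(g,t) equals the difference-in-differences of observed outcomes
    ∫ ω, (Y1 t ω - Y0 t ω) ∂(P[|{ω | G g ω = 1}]) =
      (∫ ω, (Y t ω - Y (g - 1) ω) ∂(P[|{ω | G g ω = 1}])) -
      (∫ ω, (Y t ω - Y (g - 1) ω) ∂(P[|{ω | C ω = 1}])) := by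
  have hG : ∀ g ω, 0 ≤ G g ω := fun g ω => by rcases hG01 g ω with h | h <;> simp [h]
  have hC : ∀ ω, 0 ≤ C ω := fun ω => by rcases hC01 ω with h | h <;> simp [h]
  set μg := P[|{ω | G g ω = 1}]
  set μc := P[|{ω | C ω = 1}]
  have hobs_g : ∫ ω, (Y t ω - Y (g - 1) ω) ∂μg = ∫ ω, (Y1 t ω - Y0 (g - 1) ω) ∂μg :=
    integral_cond_congr (hGmeas g (measurableSet_singleton 1)) fun ω hω => by
      rw [obs_eq_treated_of_cohort_le hobs hg hgt hω,
        obs_eq_untreated_of_lt_cohort hG hC hsum hobs hg (by omega) (by omega) hω]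
  have hobs_c : ∫ ω, (Y t ω - Y (g - 1) ω) ∂μc = ∫ ω, (Y0 t ω - Y0 (g - 1) ω) ∂μc :=
    integral_cond_congr (hCmeas (measurableSet_singleton 1)) fun ω hω => by
      rw [obs_eq_untreated_of_control hG hsum hobs htT hω,
        obs_eq_untreated_of_control hG hsum hobs (by omega) hω]
  have hgap : ∫ ω, Y0 t ω ∂μg - ∫ ω, Y0 t ω ∂μc = ∫ ω, Y0 (g - 1) ω ∂μg - ∫ ω, Y0 (g - 1) ω ∂μc :=
    eq_of_forall_eq_sub_one (fun s => ∫ ω, Y0 s ω ∂μg - ∫ ω, Y0 s ω ∂μc) (by omega)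
      fun s hs hst => by
        have := hPT s (by omega) hst
        rw [integral_sub (integrable_cond (hY0int s)) (integrable_cond (hY0int _)),
          integral_sub (integrable_cond (hY0int s)) (integrable_cond (hY0int _))] at this
        linarith
  rw [hobs_g, hobs_c, integral_sub (integrable_cond (hY1int t)) (integrable_cond (hY0int t)),
    integral_sub (integrable_cond (hY1int t)) (integrable_cond (hY0int _)),
    integral_sub (integrable_cond (hY0int t)) (integrable_cond (hY0int _))]
  linarith

/-- Callaway & Sant'Anna, unconditional DID identification.
If the unconditional parallel trends assumption holds for group `g` in all periods
`s` with `g ≤ s ≤ t`, and `P(G_g = 1) > 0`, `P(C = 1) > 0`, then for `2 ≤ g ≤ t ≤ T`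
the group-time average treatment effect satisfies
`ATT(g,t) = E[Y_t − Y_{g−1} | G_g = 1] − E[Y_t − Y_{g−1} | C = 1]`. -/
theorem att_identification_unconditional
    {Ω : Type*} [MeasurableSpace Ω] (P : Measure Ω) [IsProbabilityMeasure P]
    (T : ℕ) (hT : 2 ≤ T)
    -- potential outcomes, observed outcomes, group indicators, control indicator
    (Y0 Y1 Y : ℕ → Ω → ℝ) (G : ℕ → Ω → ℝ) (C : Ω → ℝ)
    -- measurability and integrability
    (hY0meas : ∀ t, Measurable (Y0 t)) (hY1meas : ∀ t, Measurable (Y1 t))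
    (hY0int : ∀ t, Integrable (Y0 t) P) (hY1int : ∀ t, Integrable (Y1 t) P)
    (hGmeas : ∀ g, Measurable (G g)) (hCmeas : Measurable C)
    -- indicator structure: the `G g`'s and `C` are {0,1}-valued and exactly one is one
    (hG01 : ∀ g ω, G g ω = 0 ∨ G g ω = 1)
    (hC01 : ∀ ω, C ω = 0 ∨ C ω = 1)
    (hsum : ∀ ω, (∑ g ∈ Finset.Icc 2 T, G g ω) + C ω = 1)
    -- observed outcomes
    (hobs : ∀ s ω, Y s ω =
      if ∃ g', 2 ≤ g' ∧ g' ≤ s ∧ G g' ω = 1 then Y1 s ω else Y0 s ω)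
    -- the pair (g, t) under consideration
    (g t : ℕ) (hg : 2 ≤ g) (hgt : g ≤ t) (htT : t ≤ T)
    -- positive probability of group g and of the control group
    (hPg : 0 < P {ω | G g ω = 1}) (hPC : 0 < P {ω | C ω = 1})
    -- unconditional parallel trends for group g in all periods g ≤ s ≤ t
    (hPT : ∀ s, g ≤ s → s ≤ t →
      ∫ ω, (Y0 s ω - Y0 (s - 1) ω) ∂(P[|{ω | G g ω = 1}]) =
      ∫ ω, (Y0 s ω - Y0 (s - 1) ω) ∂(P[|{ω | C ω = 1}])) :
    -- conclusion: ATT(g,t) equals the difference-in-differences of observed outcomes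
    ∫ ω, (Y1 t ω - Y0 t ω) ∂(P[|{ω | G g ω = 1}]) =
      (∫ ω, (Y t ω - Y (g - 1) ω) ∂(P[|{ω | G g ω = 1}])) -
      (∫ ω, (Y t ω - Y (g - 1) ω) ∂(P[|{ω | C ω = 1}])) :=
  att_identification_unconditional_general P T Y0 Y1 Y G C hY0int hY1int hGmeas hCmeas hG01 hC01
    hsum hobs g t hg hgt htT hPT
end

section
/- If the unconditional parallel trends assumption holds for group g in all periods s with g ≤ s ≤ t (that is, E[Y_s(0) − Y_{s−1}(0) | G_g = 1] = E[Y_s(0) − Y_{s−1}(0) | C = 1] for every such s), and P(G_g = 1) > 0, P(C = 1) > 0, then for 2 ≤ g ≤ t ≤ T the unobserved counterfactual mean is identified by the recursion: E[Y_t(0) | G_g = 1] = E[Y_t − Y_{g−1} | C = 1] + E[Y_{g−1} | G_g = 1]. -/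
/-!
Before period `g` a unit of group `g` has not been treated, and a control unit is never treated,
so on these groups the observed outcome is the untreated one. Parallel trends say that the gap
`s ↦ E[Y_s(0) | G_g = 1] - E[Y_s(0) | C = 1]` does not change from `s - 1` to `s` for `g ≤ s ≤ t`,
so it is the same at `t` as at `g - 1`, where both means are observed.
-/

open MeasureTheory ProbabilityTheory
open scoped Classical

theorem Nat.apply_eq_apply_of_forall_eq_pred {α : Type*} (f : ℕ → α) {m n : ℕ} (hmn : m ≤ n)
    (h : ∀ k, m < k → k ≤ n → f k = f (k - 1)) : f n = f m := by
  induction n, hmn using Nat.le_induction with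
  | base => rfl
  | succ k hmk ih => exact (h (k + 1) (by omega) le_rfl).trans (ih fun j hj hjk => h j hj (by omega))

theorem MeasureTheory.Integrable.cond {Ω : Type*} [MeasurableSpace Ω] {μ : Measure Ω}
    {f : Ω → ℝ} (hf : Integrable f μ) (s : Set Ω) : Integrable f μ[|s] := by
  by_cases hs : μ s = 0
  · simp [cond_eq_zero_of_meas_eq_zero hs]
  · exact hf.restrict.smul_measure (ENNReal.inv_ne_top.2 hs)

theorem nonneg_of_eq_zero_or_eq_one {x : ℝ} (h : x = 0 ∨ x = 1) : 0 ≤ x := by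
  rcases h with rfl | rfl <;> norm_num

theorem not_adopted_of_control {G : ℕ → ℝ} {c : ℝ} {T s : ℕ}
    (hG : ∀ g ∈ Finset.Icc 2 T, 0 ≤ G g) (hsum : ∑ g ∈ Finset.Icc 2 T, G g + c = 1)
    (hc : c = 1) (hs : s ≤ T) : ¬∃ g', 2 ≤ g' ∧ g' ≤ s ∧ G g' = 1 := by
  rintro ⟨g', hg', hg's, hGg'⟩
  have hzero : ∑ g ∈ Finset.Icc 2 T, G g = 0 := by linarith
  have := (Finset.sum_eq_zero_iff_of_nonneg hG).1 hzero g'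
    (Finset.mem_Icc.2 ⟨hg', hg's.trans hs⟩)
  linarith

theorem not_adopted_before_adoption {G : ℕ → ℝ} {c : ℝ} {T g s : ℕ}
    (hG : ∀ g ∈ Finset.Icc 2 T, 0 ≤ G g) (hc : 0 ≤ c)
    (hsum : ∑ g ∈ Finset.Icc 2 T, G g + c = 1)
    (hg : 2 ≤ g) (hgT : g ≤ T) (hGg : G g = 1) (hs : s < g) :
    ¬∃ g', 2 ≤ g' ∧ g' ≤ s ∧ G g' = 1 := by
  rintro ⟨g', hg', hg's, hGg'⟩
  have hsub : ({g', g} : Finset ℕ) ⊆ Finset.Icc 2 T := by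
    intro i hi
    rcases Finset.mem_insert.1 hi with rfl | hi
    · exact Finset.mem_Icc.2 ⟨hg', by omega⟩
    · rw [Finset.mem_singleton.1 hi]; exact Finset.mem_Icc.2 ⟨hg, hgT⟩
  have hpair := Finset.sum_le_sum_of_subset_of_nonneg hsub fun i hi _ => hG i hi
  rw [Finset.sum_pair (by omega), hGg', hGg] at hpair
  linarith

theorem counterfactual_mean_identification_general
    {Ω : Type*} [MeasurableSpace Ω] (P : Measure Ω)
    (T : ℕ)
    -- potential outcomes, observed outcomes, group indicators, control indicator
    (Y0 Y1 Y : ℕ → Ω → ℝ) (G : ℕ → Ω → ℝ) (C : Ω → ℝ)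
    -- measurability and integrability
    (hY0int : ∀ t, Integrable (Y0 t) P)
    (hGmeas : ∀ g, Measurable (G g)) (hCmeas : Measurable C)
    -- indicator structure: the `G g`'s and `C` are {0,1}-valued and exactly one is one
    (hG01 : ∀ g ω, G g ω = 0 ∨ G g ω = 1)
    (hC01 : ∀ ω, C ω = 0 ∨ C ω = 1)
    (hsum : ∀ ω, (∑ g ∈ Finset.Icc 2 T, G g ω) + C ω = 1)
    -- observed outcomes
    (hobs : ∀ s ω, Y s ω =
      if ∃ g', 2 ≤ g' ∧ g' ≤ s ∧ G g' ω = 1 then Y1 s ω else Y0 s ω)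
    -- the pair (g, t) under consideration
    (g t : ℕ) (hg : 2 ≤ g) (hgt : g ≤ t) (htT : t ≤ T)
    -- unconditional parallel trends for group g in all periods g ≤ s ≤ t
    (hPT : ∀ s, g ≤ s → s ≤ t →
      ∫ ω, (Y0 s ω - Y0 (s - 1) ω) ∂(P[|{ω | G g ω = 1}]) =
      ∫ ω, (Y0 s ω - Y0 (s - 1) ω) ∂(P[|{ω | C ω = 1}])) :
    -- conclusion: the counterfactual untreated mean for group g at time t is identified
    ∫ ω, Y0 t ω ∂(P[|{ω | G g ω = 1}]) =
      (∫ ω, (Y t ω - Y (g - 1) ω) ∂(P[|{ω | C ω = 1}])) +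
      ∫ ω, Y (g - 1) ω ∂(P[|{ω | G g ω = 1}]) := by
  set μG := P[|{ω | G g ω = 1}]
  set μC := P[|{ω | C ω = 1}]
  have hGnn : ∀ g' ω, 0 ≤ G g' ω := fun g' ω => nonneg_of_eq_zero_or_eq_one (hG01 g' ω)
  have hYC : ∀ᵐ ω ∂μC, Y t ω - Y (g - 1) ω = Y0 t ω - Y0 (g - 1) ω :=
    ae_cond_of_forall_mem (hCmeas (measurableSet_singleton 1)) fun ω hω => by
      have hnot s (hs : s ≤ T) := not_adopted_of_control (fun g' _ => hGnn g' ω) (hsum ω) hω hs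
      rw [hobs t, hobs (g - 1), if_neg (hnot t htT), if_neg (hnot (g - 1) (by omega))]
  have hYG : ∀ᵐ ω ∂μG, Y (g - 1) ω = Y0 (g - 1) ω :=
    ae_cond_of_forall_mem (hGmeas g (measurableSet_singleton 1)) fun ω hω => by
      rw [hobs, if_neg (not_adopted_before_adoption (fun g' _ => hGnn g' ω)
        (nonneg_of_eq_zero_or_eq_one (hC01 ω)) (hsum ω) hg (hgt.trans htT) hω (by omega))]
  have hgap : ∫ ω, Y0 t ω ∂μG - ∫ ω, Y0 t ω ∂μC =
      ∫ ω, Y0 (g - 1) ω ∂μG - ∫ ω, Y0 (g - 1) ω ∂μC :=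
    Nat.apply_eq_apply_of_forall_eq_pred (fun s => ∫ ω, Y0 s ω ∂μG - ∫ ω, Y0 s ω ∂μC)
      (by omega) fun s hs hst => by
        have htrend := hPT s (by omega) hst
        rw [integral_sub ((hY0int s).cond _) ((hY0int (s - 1)).cond _),
          integral_sub ((hY0int s).cond _) ((hY0int (s - 1)).cond _)] at htrend
        linarith
  rw [integral_congr_ae hYC, integral_congr_ae hYG,
    integral_sub ((hY0int t).cond _) ((hY0int (g - 1)).cond _)]
  linarith

/-- Callaway & Sant'Anna, identification of the counterfactual mean.
If the unconditional parallel trends assumption holds for group `g` in all periods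
`s` with `g ≤ s ≤ t`, and `P(G_g = 1) > 0`, `P(C = 1) > 0`, then for `2 ≤ g ≤ t ≤ T`
the unobserved counterfactual mean is identified by the recursion
`E[Y_t(0) | G_g = 1] = E[Y_t − Y_{g−1} | C = 1] + E[Y_{g−1} | G_g = 1]`. -/
theorem counterfactual_mean_identification
    {Ω : Type*} [MeasurableSpace Ω] (P : Measure Ω) [IsProbabilityMeasure P]
    (T : ℕ) (hT : 2 ≤ T)
    -- potential outcomes, observed outcomes, group indicators, control indicator
    (Y0 Y1 Y : ℕ → Ω → ℝ) (G : ℕ → Ω → ℝ) (C : Ω → ℝ)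
    -- measurability and integrability
    (hY0meas : ∀ t, Measurable (Y0 t)) (hY1meas : ∀ t, Measurable (Y1 t))
    (hY0int : ∀ t, Integrable (Y0 t) P) (hY1int : ∀ t, Integrable (Y1 t) P)
    (hGmeas : ∀ g, Measurable (G g)) (hCmeas : Measurable C)
    -- indicator structure: the `G g`'s and `C` are {0,1}-valued and exactly one is one
    (hG01 : ∀ g ω, G g ω = 0 ∨ G g ω = 1)
    (hC01 : ∀ ω, C ω = 0 ∨ C ω = 1)
    (hsum : ∀ ω, (∑ g ∈ Finset.Icc 2 T, G g ω) + C ω = 1)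
    -- observed outcomes
    (hobs : ∀ s ω, Y s ω =
      if ∃ g', 2 ≤ g' ∧ g' ≤ s ∧ G g' ω = 1 then Y1 s ω else Y0 s ω)
    -- the pair (g, t) under consideration
    (g t : ℕ) (hg : 2 ≤ g) (hgt : g ≤ t) (htT : t ≤ T)
    -- positive probability of group g and of the control group
    (hPg : 0 < P {ω | G g ω = 1}) (hPC : 0 < P {ω | C ω = 1})
    -- unconditional parallel trends for group g in all periods g ≤ s ≤ t
    (hPT : ∀ s, g ≤ s → s ≤ t →
      ∫ ω, (Y0 s ω - Y0 (s - 1) ω) ∂(P[|{ω | G g ω = 1}]) =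
      ∫ ω, (Y0 s ω - Y0 (s - 1) ω) ∂(P[|{ω | C ω = 1}])) :
    -- conclusion: the counterfactual untreated mean for group g at time t is identified
    ∫ ω, Y0 t ω ∂(P[|{ω | G g ω = 1}]) =
      (∫ ω, (Y t ω - Y (g - 1) ω) ∂(P[|{ω | C ω = 1}])) +
      ∫ ω, Y (g - 1) ω ∂(P[|{ω | G g ω = 1}]) :=
  counterfactual_mean_identification_general P T Y0 Y1 Y G C hY0int hGmeas hCmeas hG01 hC01 hsum
    hobs g t hg hgt htT hPT
end

section
/- Under overlap, for every bounded Borel function f: ℝ^k → ℝ, the inverse-probability weighting by the odds of the generalized propensity score balances the covariate distribution of the control group to that of group g: E[G_g f(X)] = E[(p_g(X) C / (1 − p_g(X))) f(X)]. -/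
open MeasureTheory ProbabilityTheory
open scoped ENNReal

/-!
Condition on `S = {G + C = 1}`. Under `P[|S]` the score `p` is a version of `E[G | X]`, so
pulling the bounded `σ(X)`-measurable factors `f(X)` and `p/(1-p) f(X)` out of the conditional
expectation gives
`E[G f(X) | S] = E[p f(X) | S] = E[p/(1-p) (1-p) f(X) | S] = E[p/(1-p) (1-G) f(X) | S]`,
and `1 - G = C` on `S`. Both integrands vanish off `S`, so multiplying by `P(S)` returns
the identity under `P`.
-/

lemma eq_zero_and_eq_zero_of_add_ne_one {g c : ℝ} (hg : g = 0 ∨ g = 1) (hc : c = 0 ∨ c = 1)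
    (hgc : g + c ≤ 1) (h : g + c ≠ 1) : g = 0 ∧ c = 0 := by
  rcases hg with rfl | rfl <;> rcases hc with rfl | rfl <;> norm_num at *

lemma norm_div_one_sub_le_inv {x ε : ℝ} (hε : 0 < ε) (hx₀ : 0 ≤ x) (hx : x ≤ 1 - ε) :
    ‖x / (1 - x)‖ ≤ ε⁻¹ := by
  rw [Real.norm_of_nonneg (div_nonneg hx₀ (by linarith)), div_le_iff₀ (by linarith),
    le_inv_mul_iff₀ hε]
  nlinarith

namespace ProbabilityTheory

variable {Ω : Type*} [MeasurableSpace Ω] {μ : Measure Ω} {s : Set Ω}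

lemma integral_eq_measureReal_mul_integral_cond (hs : μ s ≠ ∞) {g : Ω → ℝ}
    (hg : ∀ ω ∉ s, g ω = 0) : ∫ ω, g ω ∂μ = μ.real s * ∫ ω, g ω ∂μ[|s] := by
  by_cases hs₀ : μ s = 0
  · rw [← setIntegral_eq_integral_of_forall_compl_eq_zero hg, Measure.restrict_eq_zero.mpr hs₀]
    simp [measureReal_def, hs₀]
  · rw [cond, integral_smul_measure, setIntegral_eq_integral_of_forall_compl_eq_zero hg,
      ENNReal.toReal_inv, smul_eq_mul, ← mul_assoc, measureReal_def,
      mul_inv_cancel₀ (ENNReal.toReal_ne_zero.mpr ⟨hs₀, hs⟩), one_mul]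

end ProbabilityTheory

namespace MeasureTheory

variable {Ω : Type*} {m mΩ : MeasurableSpace Ω} {μ : Measure Ω} [IsFiniteMeasure μ]
  {Y p : Ω → ℝ}

lemma one_sub_ae_eq_condExp_one_sub (hm : m ≤ mΩ) (hY : Integrable Y μ)
    (hp : p =ᵐ[μ] μ[Y | m]) : (fun ω ↦ 1 - p ω) =ᵐ[μ] μ[fun ω ↦ 1 - Y ω | m] := by
  have hsub := condExp_sub (m := m) (integrable_const (1 : ℝ)) hY
  rw [condExp_const hm] at hsub
  filter_upwards [hsub, hp] with ω hsubω hpω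
  rw [show (fun ω ↦ 1 - Y ω) = (fun _ ↦ (1 : ℝ)) - Y from rfl, hsubω, hpω]
  rfl

lemma integral_mul_eq_integral_mul_of_ae_eq_condExp (hm : m ≤ mΩ) {h : Ω → ℝ} {c : ℝ}
    (hh : StronglyMeasurable[m] h) (hbdd : ∀ᵐ ω ∂μ, ‖h ω‖ ≤ c) (hY : Integrable Y μ)
    (hp : p =ᵐ[μ] μ[Y | m]) : ∫ ω, h ω * Y ω ∂μ = ∫ ω, h ω * p ω ∂μ := by
  calc ∫ ω, h ω * Y ω ∂μ = ∫ ω, μ[h * Y | m] ω ∂μ := (integral_condExp hm).symm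
    _ = ∫ ω, h ω * p ω ∂μ := by
      refine integral_congr_ae ?_
      filter_upwards [condExp_stronglyMeasurable_mul_of_bound hm hh hY c hbdd, hp]
        with ω hω hpω
      rw [hω, Pi.mul_apply, hpω]

lemma integral_mul_eq_integral_odds_mul_one_sub_mul (hm : m ≤ mΩ) {h : Ω → ℝ} {ε M : ℝ}
    (hε : 0 < ε) (hY : Integrable Y μ) (hp : p =ᵐ[μ] μ[Y | m]) (hpm : Measurable[m] p)
    (hpε : ∀ᵐ ω ∂μ, 0 ≤ p ω ∧ p ω ≤ 1 - ε) (hh : Measurable[m] h)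
    (hhM : ∀ᵐ ω ∂μ, ‖h ω‖ ≤ M) :
    ∫ ω, Y ω * h ω ∂μ = ∫ ω, p ω / (1 - p ω) * (1 - Y ω) * h ω ∂μ := by
  have hodds_mul : ∀ᵐ ω ∂μ, ‖p ω / (1 - p ω) * h ω‖ ≤ ε⁻¹ * M := by
    filter_upwards [hpε, hhM] with ω hpω hhω
    rw [norm_mul]
    exact mul_le_mul (norm_div_one_sub_le_inv hε hpω.1 hpω.2) hhω (norm_nonneg _)
      (inv_nonneg.mpr hε.le)
  calc ∫ ω, Y ω * h ω ∂μ = ∫ ω, h ω * p ω ∂μ := by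
        simp_rw [mul_comm (Y _)]
        exact integral_mul_eq_integral_mul_of_ae_eq_condExp hm hh.stronglyMeasurable hhM hY hp
    _ = ∫ ω, (p ω / (1 - p ω) * h ω) * (1 - p ω) ∂μ := by
        refine integral_congr_ae ?_
        filter_upwards [hpε] with ω hpω
        field_simp [show 1 - p ω ≠ 0 by linarith]
    _ = ∫ ω, (p ω / (1 - p ω) * h ω) * (1 - Y ω) ∂μ :=
        (integral_mul_eq_integral_mul_of_ae_eq_condExp hm
          ((hpm.div (measurable_const.sub hpm)).mul hh).stronglyMeasurable hodds_mul
          ((integrable_const 1).sub hY) (one_sub_ae_eq_condExp_one_sub hm hY hp)).symm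
    _ = ∫ ω, p ω / (1 - p ω) * (1 - Y ω) * h ω ∂μ := by
        simp_rw [mul_right_comm _ (h _)]

end MeasureTheory

theorem odds_weighting_balances_covariates_general
    {Ω : Type*} [MeasurableSpace Ω] (P : Measure Ω) [IsProbabilityMeasure P]
    (k : ℕ) (X : Ω → (Fin k → ℝ)) (hXmeas : Measurable X)
    (G C : Ω → ℝ) (hGmeas : Measurable G) (hCmeas : Measurable C)
    -- indicator structure
    (hG01 : ∀ ω, G ω = 0 ∨ G ω = 1) (hC01 : ∀ ω, C ω = 0 ∨ C ω = 1)
    (hGC : ∀ ω, G ω + C ω ≤ 1)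
    -- the generalized propensity score: a σ(X)-measurable version of E[G | X, G + C = 1]
    (p : Ω → ℝ)
    (hpmeas : Measurable[MeasurableSpace.comap X inferInstance] p)
    (hpver : p =ᵐ[P[|{ω | G ω + C ω = 1}]]
      (P[|{ω | G ω + C ω = 1}])[G | MeasurableSpace.comap X inferInstance])
    -- overlap
    (ε : ℝ) (hε : 0 < ε)
    (hoverlap : ∀ᵐ ω ∂P, 0 ≤ p ω ∧ p ω ≤ 1 - ε)
    -- a bounded Borel function of the covariates
    (f : (Fin k → ℝ) → ℝ) (hfmeas : Measurable f) (hfbdd : ∃ M, ∀ x, |f x| ≤ M) :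
    ∫ ω, G ω * f (X ω) ∂P = ∫ ω, (p ω * C ω / (1 - p ω)) * f (X ω) ∂P := by
  obtain ⟨M, hM⟩ := hfbdd
  set S := {ω | G ω + C ω = 1}
  have hoff (ω) (hω : ω ∉ S) :=
    eq_zero_and_eq_zero_of_add_ne_one (hG01 ω) (hC01 ω) (hGC ω) hω
  rw [integral_eq_measureReal_mul_integral_cond (measure_ne_top P S)
      fun ω hω ↦ by simp [(hoff ω hω).1],
    integral_eq_measureReal_mul_integral_cond (measure_ne_top P S)
      fun ω hω ↦ by simp [(hoff ω hω).2]]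
  congr 1
  have hGint : Integrable G P[|S] := .of_bound hGmeas.aestronglyMeasurable 1
    (.of_forall fun ω ↦ by rcases hG01 ω with h | h <;> simp [h])
  have hCG : ∀ᵐ ω ∂P[|S], C ω = 1 - G ω := by
    filter_upwards [ae_cond_mem (measurableSet_eq_fun (hGmeas.add hCmeas) measurable_const)]
      with ω hω
    linarith [show G ω + C ω = 1 from hω]
  calc ∫ ω, G ω * f (X ω) ∂P[|S]
    _ = ∫ ω, p ω / (1 - p ω) * (1 - G ω) * f (X ω) ∂P[|S] :=
        integral_mul_eq_integral_odds_mul_one_sub_mul hXmeas.comap_le hε hGint hpver hpmeas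
          (cond_absolutelyContinuous.ae_le hoverlap) (hfmeas.comp (comap_measurable X))
          (.of_forall fun ω ↦ (hM (X ω)).trans_eq' (Real.norm_eq_abs _))
    _ = ∫ ω, (p ω * C ω / (1 - p ω)) * f (X ω) ∂P[|S] :=
        integral_congr_ae (hCG.mono fun ω hω ↦ by simp only [hω]; ring)

/-- covariate balancing by propensity-score odds weighting.
Under overlap, for every bounded Borel function `f : ℝ^k → ℝ`,
`E[G_g f(X)] = E[(p_g(X) C / (1 − p_g(X))) f(X)]`. -/
theorem odds_weighting_balances_covariates
    {Ω : Type*} [MeasurableSpace Ω] (P : Measure Ω) [IsProbabilityMeasure P]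
    (k : ℕ) (X : Ω → (Fin k → ℝ)) (hXmeas : Measurable X)
    (G C : Ω → ℝ) (hGmeas : Measurable G) (hCmeas : Measurable C)
    -- indicator structure
    (hG01 : ∀ ω, G ω = 0 ∨ G ω = 1) (hC01 : ∀ ω, C ω = 0 ∨ C ω = 1)
    (hGC : ∀ ω, G ω + C ω ≤ 1)
    (hPg : 0 < P {ω | G ω = 1}) (hPC : 0 < P {ω | C ω = 1})
    -- the generalized propensity score: a σ(X)-measurable version of E[G | X, G + C = 1]
    (p : Ω → ℝ)
    (hpmeas : Measurable[MeasurableSpace.comap X inferInstance] p)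
    (hpver : p =ᵐ[P[|{ω | G ω + C ω = 1}]]
      (P[|{ω | G ω + C ω = 1}])[G | MeasurableSpace.comap X inferInstance])
    -- overlap
    (ε : ℝ) (hε : 0 < ε)
    (hoverlap : ∀ᵐ ω ∂P, 0 ≤ p ω ∧ p ω ≤ 1 - ε)
    -- a bounded Borel function of the covariates
    (f : (Fin k → ℝ) → ℝ) (hfmeas : Measurable f) (hfbdd : ∃ M, ∀ x, |f x| ≤ M) :
    ∫ ω, G ω * f (X ω) ∂P = ∫ ω, (p ω * C ω / (1 - p ω)) * f (X ω) ∂P :=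
  odds_weighting_balances_covariates_general P k X hXmeas G C hGmeas hCmeas hG01 hC01 hGC p hpmeas
    hpver ε hε hoverlap f hfmeas hfbdd
end

section
/- Under overlap, the expected odds-weighted control indicator equals the probability of group g: E[p_g(X) C / (1 − p_g(X))] = E[G_g]. (In the standard two-period, two-group DID setup this shows the weighted estimand reduces to Abadie's Lemma 3.1 representation of the ATT.) -/
open MeasureTheory ProbabilityTheory

/-!
On the event `S = {G + C = 1}` one has `C = 1 - G`, and both indicators vanish off `S`, so each
side is `P(S)` times the corresponding expectation under `P(· | S)`. There the odds
`w = p / (1 - p)` are `σ(X)`-measurable and bounded by `1 / ε` thanks to overlap, so the tower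
property gives `E[w G] = E[w p]`, whence `E[w (1 - G)] = E[w (1 - p)] = E[p] = E[G]`.
-/

theorem setIntegral_eq_measureReal_mul_integral_cond {Ω : Type*} [MeasurableSpace Ω]
    {μ : Measure Ω} [IsFiniteMeasure μ] (s : Set Ω) (f : Ω → ℝ) :
    ∫ ω in s, f ω ∂μ = μ.real s * ∫ ω, f ω ∂μ[|s] := by
  by_cases hs : μ s = 0
  · simp [Measure.restrict_eq_zero.mpr hs, measureReal_def, hs]
  · rw [ProbabilityTheory.cond, integral_smul_measure, smul_eq_mul, ENNReal.toReal_inv,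
      ← mul_assoc, measureReal_def,
      mul_inv_cancel₀ (ENNReal.toReal_ne_zero.mpr ⟨hs, measure_ne_top μ s⟩), one_mul]

theorem eq_zero_and_eq_zero_of_add_ne_one_s7 {a b : ℝ} (ha : a = 0 ∨ a = 1) (hb : b = 0 ∨ b = 1)
    (hab : a + b ≤ 1) (hne : a + b ≠ 1) : a = 0 ∧ b = 0 := by
  rcases ha with rfl | rfl <;> rcases hb with rfl | rfl <;> norm_num at *

section OddsWeighting

variable {Ω : Type*} {m m₀ : MeasurableSpace Ω} {μ : Measure Ω}

theorem integral_mul_condExp_of_stronglyMeasurable (hm : m ≤ m₀) [SigmaFinite (μ.trim hm)]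
    {w g : Ω → ℝ} {c : ℝ} (hw : StronglyMeasurable[m] w) (hwc : ∀ᵐ ω ∂μ, ‖w ω‖ ≤ c)
    (hg : Integrable g μ) :
    ∫ ω, w ω * μ[g|m] ω ∂μ = ∫ ω, w ω * g ω ∂μ := by
  have hwg : Integrable (w * g) μ := hg.bdd_mul (hw.mono hm).aestronglyMeasurable hwc
  calc ∫ ω, w ω * μ[g|m] ω ∂μ = ∫ ω, μ[w * g|m] ω ∂μ :=
        integral_congr_ae (condExp_mul_of_stronglyMeasurable_left hw hwg hg).symm
    _ = ∫ ω, w ω * g ω ∂μ := integral_condExp hm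

theorem integral_odds_mul_one_sub_eq_integral [IsFiniteMeasure μ] (hm : m ≤ m₀)
    {p g : Ω → ℝ} {ε : ℝ} (hε : 0 < ε) (hp : Measurable[m] p) (hpg : p =ᵐ[μ] μ[g|m])
    (hg : Integrable g μ) (hpb : ∀ᵐ ω ∂μ, 0 ≤ p ω ∧ p ω ≤ 1 - ε) :
    ∫ ω, p ω / (1 - p ω) * (1 - g ω) ∂μ = ∫ ω, g ω ∂μ := by
  have : IsFiniteMeasure (μ.trim hm) := isFiniteMeasure_trim hm
  set w : Ω → ℝ := fun ω => p ω / (1 - p ω)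
  have hw : StronglyMeasurable[m] w := (hp.div (measurable_const.sub hp)).stronglyMeasurable
  have hwc : ∀ᵐ ω ∂μ, ‖w ω‖ ≤ ε⁻¹ := by
    filter_upwards [hpb] with ω ⟨hp0, hp1⟩
    rw [Real.norm_of_nonneg (div_nonneg hp0 (by linarith)), ← one_div]
    exact div_le_div₀ zero_le_one (by linarith) hε (by linarith)
  have hw₀ : AEStronglyMeasurable w μ := (hw.mono hm).aestronglyMeasurable
  have hwi : Integrable w μ := .of_bound hw₀ _ hwc
  have hwg : Integrable (fun ω => w ω * g ω) μ := hg.bdd_mul hw₀ hwc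
  have hwp : Integrable (fun ω => w ω * p ω) μ :=
    (integrable_condExp.congr hpg.symm).bdd_mul hw₀ hwc
  calc ∫ ω, w ω * (1 - g ω) ∂μ = ∫ ω, w ω ∂μ - ∫ ω, w ω * g ω ∂μ := by
        simp_rw [mul_one_sub]; exact integral_sub hwi hwg
    _ = ∫ ω, w ω ∂μ - ∫ ω, w ω * p ω ∂μ := by
        rw [← integral_mul_condExp_of_stronglyMeasurable hm hw hwc hg]
        exact congrArg _ (integral_congr_ae (hpg.mono fun ω h => congrArg (w ω * ·) h.symm))
    _ = ∫ ω, w ω * (1 - p ω) ∂μ := by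
        simp_rw [mul_one_sub]; exact (integral_sub hwi hwp).symm
    _ = ∫ ω, p ω ∂μ := integral_congr_ae <| hpb.mono fun ω ⟨_, hp1⟩ =>
        div_mul_cancel₀ (p ω) (by linarith)
    _ = ∫ ω, g ω ∂μ := by rw [integral_congr_ae hpg, integral_condExp hm]

end OddsWeighting

theorem expected_odds_weight_eq_group_probability_general
    {Ω : Type*} [MeasurableSpace Ω] (P : Measure Ω) [IsProbabilityMeasure P]
    (k : ℕ) (X : Ω → (Fin k → ℝ)) (hXmeas : Measurable X)
    (G C : Ω → ℝ) (hGmeas : Measurable G) (hCmeas : Measurable C)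
    -- indicator structure
    (hG01 : ∀ ω, G ω = 0 ∨ G ω = 1) (hC01 : ∀ ω, C ω = 0 ∨ C ω = 1)
    (hGC : ∀ ω, G ω + C ω ≤ 1)
    -- the generalized propensity score: a σ(X)-measurable version of E[G | X, G + C = 1]
    (p : Ω → ℝ)
    (hpmeas : Measurable[MeasurableSpace.comap X inferInstance] p)
    (hpver : p =ᵐ[P[|{ω | G ω + C ω = 1}]]
      (P[|{ω | G ω + C ω = 1}])[G | MeasurableSpace.comap X inferInstance])
    -- overlap
    (ε : ℝ) (hε : 0 < ε)
    (hoverlap : ∀ᵐ ω ∂P, 0 ≤ p ω ∧ p ω ≤ 1 - ε) :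
    ∫ ω, p ω * C ω / (1 - p ω) ∂P = ∫ ω, G ω ∂P := by
  set S := {ω | G ω + C ω = 1}
  have hS : MeasurableSet S := measurableSet_eq_fun (hGmeas.add hCmeas) measurable_const
  have hoff (ω) (hω : ω ∉ S) : G ω = 0 ∧ C ω = 0 :=
    eq_zero_and_eq_zero_of_add_ne_one_s7 (hG01 ω) (hC01 ω) (hGC ω) hω
  have hGint : Integrable G P[|S] := .of_bound hGmeas.aestronglyMeasurable 1 <|
    ae_of_all _ fun ω => by rcases hG01 ω with h | h <;> simp [h]
  calc ∫ ω, p ω * C ω / (1 - p ω) ∂P = ∫ ω in S, p ω / (1 - p ω) * (1 - G ω) ∂P := by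
        rw [← setIntegral_eq_integral_of_forall_compl_eq_zero fun ω hω => by
          simp [(hoff ω hω).2]]
        refine setIntegral_congr_fun hS fun ω (hω : G ω + C ω = 1) => ?_
        rw [show C ω = 1 - G ω by linarith]; ring
    _ = P.real S * ∫ ω, G ω ∂P[|S] := by
        rw [setIntegral_eq_measureReal_mul_integral_cond, integral_odds_mul_one_sub_eq_integral
          hXmeas.comap_le hε hpmeas hpver hGint (cond_absolutelyContinuous.ae_le hoverlap)]
    _ = ∫ ω, G ω ∂P := by
        rw [← setIntegral_eq_measureReal_mul_integral_cond,
          setIntegral_eq_integral_of_forall_compl_eq_zero fun ω hω => (hoff ω hω).1]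

/-- the expected odds-weighted control indicator equals `P(G_g = 1)`.
Under overlap, `E[p_g(X) C / (1 − p_g(X))] = E[G_g]`. -/
theorem expected_odds_weight_eq_group_probability
    {Ω : Type*} [MeasurableSpace Ω] (P : Measure Ω) [IsProbabilityMeasure P]
    (k : ℕ) (X : Ω → (Fin k → ℝ)) (hXmeas : Measurable X)
    (G C : Ω → ℝ) (hGmeas : Measurable G) (hCmeas : Measurable C)
    -- indicator structure
    (hG01 : ∀ ω, G ω = 0 ∨ G ω = 1) (hC01 : ∀ ω, C ω = 0 ∨ C ω = 1)
    (hGC : ∀ ω, G ω + C ω ≤ 1)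
    (hPg : 0 < P {ω | G ω = 1}) (hPC : 0 < P {ω | C ω = 1})
    -- the generalized propensity score: a σ(X)-measurable version of E[G | X, G + C = 1]
    (p : Ω → ℝ)
    (hpmeas : Measurable[MeasurableSpace.comap X inferInstance] p)
    (hpver : p =ᵐ[P[|{ω | G ω + C ω = 1}]]
      (P[|{ω | G ω + C ω = 1}])[G | MeasurableSpace.comap X inferInstance])
    -- overlap
    (ε : ℝ) (hε : 0 < ε)
    (hoverlap : ∀ᵐ ω ∂P, 0 ≤ p ω ∧ p ω ≤ 1 - ε) :
    ∫ ω, p ω * C ω / (1 - p ω) ∂P = ∫ ω, G ω ∂P :=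
  expected_odds_weight_eq_group_probability_general P k X hXmeas G C hGmeas hCmeas hG01 hC01 hGC p
    hpmeas hpver ε hε hoverlap
end

section
/- Under overlap, for 2 ≤ t < g ≤ T, the conditional pre-trends null hypothesis E[Y_t − Y_{t−1} | X, G_g = 1] = E[Y_t − Y_{t−1} | X, C = 1] (P(· | G_g = 1)-a.s.) holds if and only if the weighted conditional moment restriction E[(w_g^G − w_g^C)(Y_t − Y_{t−1}) | σ(X)] = 0 holds P-a.s., where the latter conditional expectation is taken under the full measure P. -/
/-!
Write `m = σ(X)`, `Z = Y_t − Y_{t−1}`, `A = {G_g = 1}`, `B = {C = 1}`. An `m`-measurable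
`h` is a version of `E[Z | X, A]` under `P(· | A)` iff `h · E[1_A | m] = E[1_A Z | m]` `P`-a.s.
Applied on `A ∪ B` to `1_A`, this turns the propensity score into the odds identity
`E[1_A | m] = p/(1 − p) · E[1_B | m]`, with `p/(1 − p)` bounded by overlap. Consequently a common
version of the two conditional means exists iff `E[1_A Z | m] = p/(1 − p) · E[1_B Z | m]`, and
the odds identity also gives `E[p 1_B/(1 − p)] = P(A) = E[1_A]`, so the weighted moment is
`(E[1_A Z | m] − p/(1 − p) · E[1_B Z | m]) / P(A)`.
-/

open MeasureTheory ProbabilityTheory Filter Set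

lemma eq_indicator_setOf_eq_one {Ω : Type*} {f : Ω → ℝ} (hf : ∀ ω, f ω = 0 ∨ f ω = 1) :
    f = {ω | f ω = 1}.indicator 1 := by
  ext ω
  rcases hf ω with h | h <;> simp [h]

lemma disjoint_setOf_eq_one_of_sum_add_eq_one {ι Ω : Type*} {s : Finset ι} {G : ι → Ω → ℝ}
    {C : Ω → ℝ} {g : ι} (hg : g ∈ s) (hG : ∀ i ω, 0 ≤ G i ω)
    (hsum : ∀ ω, ∑ i ∈ s, G i ω + C ω = 1) :
    Disjoint {ω | G g ω = 1} {ω | C ω = 1} := by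
  refine disjoint_left.2 fun ω (hGω : G g ω = 1) (hCω : C ω = 1) => ?_
  have hle : G g ω ≤ ∑ i ∈ s, G i ω :=
    Finset.single_le_sum (f := fun i => G i ω) (fun i _ => hG i ω) hg
  linarith [hsum ω]

lemma setOf_add_eq_one_eq_union {Ω : Type*} {f h : Ω → ℝ} (hf : ∀ ω, f ω = 0 ∨ f ω = 1)
    (hh : ∀ ω, h ω = 0 ∨ h ω = 1) (hfh : Disjoint {ω | f ω = 1} {ω | h ω = 1}) :
    {ω | f ω + h ω = 1} = {ω | f ω = 1} ∪ {ω | h ω = 1} := by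
  ext ω
  have hnot : f ω = 1 → h ω ≠ 1 := fun hω =>
    disjoint_left.1 hfh (show ω ∈ {ω | f ω = 1} from hω)
  rcases hf ω with hfω | hfω <;> rcases hh ω with hhω | hhω <;> simp_all

lemma exists_measurable_comp_iff {Ω β : Type*} [MeasurableSpace β] {X : Ω → β}
    {Q : (Ω → ℝ) → Prop} :
    (∃ h : Ω → ℝ, Measurable[MeasurableSpace.comap X inferInstance] h ∧ Q h) ↔
      ∃ f : β → ℝ, Measurable f ∧ Q (fun ω => f (X ω)) := by
  constructor
  · rintro ⟨h, hh, hQ⟩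
    obtain ⟨f, hf, rfl⟩ := hh.exists_eq_measurable_comp
    exact ⟨f, hf, hQ⟩
  · rintro ⟨f, hf, hQ⟩
    exact ⟨_, hf.comp (comap_measurable X), hQ⟩

lemma integrable_odds_mul {Ω : Type*} [MeasurableSpace Ω] {P : Measure Ω} {p g : Ω → ℝ}
    {ε : ℝ} (hp : Measurable p) (hg : Integrable g P) (hε : 0 < ε)
    (hoverlap : ∀ᵐ ω ∂P, 0 ≤ p ω ∧ p ω ≤ 1 - ε) :
    Integrable ((fun ω => p ω / (1 - p ω)) * g) P := by
  refine hg.bdd_mul (c := ε⁻¹) (hp.div (measurable_const.sub hp)).aestronglyMeasurable ?_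
  filter_upwards [hoverlap] with ω ⟨hp0, hp1⟩
  rw [Real.norm_eq_abs, abs_of_nonneg (div_nonneg hp0 (by linarith))]
  calc p ω / (1 - p ω) ≤ 1 / (1 - p ω) := by gcongr; linarith; linarith
    _ ≤ ε⁻¹ := by rw [one_div]; exact inv_anti₀ hε (by linarith)

section CondExpOnEvent

variable {Ω : Type*} {m mΩ : MeasurableSpace Ω} {P : Measure Ω}

lemma condExp_weighted_ae_eq_zero_iff {A B : Set Ω} (hA : MeasurableSet A)
    (hB : MeasurableSet B) {Z φ : Ω → ℝ} {α : ℝ} (hα : α ≠ 0) (hφ : StronglyMeasurable[m] φ)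
    (hZ : Integrable Z P) (hφZ : Integrable (φ * B.indicator Z) P) :
    P[fun ω => (A.indicator 1 ω / α - φ ω * B.indicator 1 ω / α) * Z ω|m] =ᵐ[P] 0 ↔
      P[A.indicator Z|m] =ᵐ[P] φ * P[B.indicator Z|m] := by
  have hfun : (fun ω => (A.indicator 1 ω / α - φ ω * B.indicator 1 ω / α) * Z ω)
      = α⁻¹ • (A.indicator Z - φ * B.indicator Z) := by
    ext ω
    by_cases hωA : ω ∈ A <;> by_cases hωB : ω ∈ B <;> simp [hωA, hωB] <;> ring
  have hdecomp : P[fun ω => (A.indicator 1 ω / α - φ ω * B.indicator 1 ω / α) * Z ω|m]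
      =ᵐ[P] α⁻¹ • (P[A.indicator Z|m] - φ * P[B.indicator Z|m]) := by
    rw [hfun]
    filter_upwards [condExp_smul (μ := P) α⁻¹ (A.indicator Z - φ * B.indicator Z) m,
      condExp_sub ((integrable_indicator_iff hA).2 hZ.integrableOn) hφZ m,
      condExp_mul_of_stronglyMeasurable_left hφ hφZ ((integrable_indicator_iff hB).2
        hZ.integrableOn)] with ω h1 h2 h3
    simp only [Pi.smul_apply, Pi.sub_apply, Pi.mul_apply] at h1 h2 h3 ⊢
    rw [h1, h2, h3]
  constructor
  · intro H
    filter_upwards [H, hdecomp] with ω hω hdω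
    simp only [Pi.smul_apply, Pi.sub_apply, Pi.mul_apply, Pi.zero_apply, smul_eq_mul]
      at hω hdω ⊢
    rw [hω] at hdω
    have := (mul_eq_zero.1 hdω.symm).resolve_left (inv_ne_zero hα)
    linarith
  · intro H
    filter_upwards [H, hdecomp] with ω hω hdω
    simp only [Pi.smul_apply, Pi.sub_apply, Pi.mul_apply, Pi.zero_apply, smul_eq_mul]
      at hω hdω ⊢
    rw [hdω, hω, sub_self, mul_zero]

variable [IsFiniteMeasure P]

lemma integrable_cond_iff {A : Set Ω} {f : Ω → ℝ} :
    Integrable f P[|A] ↔ IntegrableOn f A P := by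
  by_cases hPA : P A = 0
  · simp [IntegrableOn, Measure.restrict_eq_zero.2 hPA, cond_eq_zero_of_meas_eq_zero hPA]
  have hrestrict : P.restrict A = P A • P[|A] := by
    rw [ProbabilityTheory.cond, smul_smul, ENNReal.mul_inv_cancel hPA (measure_ne_top P A),
      one_smul]
  refine ⟨fun hf => ?_, fun hf => hf.smul_measure (ENNReal.inv_ne_top.mpr hPA)⟩
  rw [IntegrableOn, hrestrict]
  exact hf.smul_measure (measure_ne_top P A)

lemma setIntegral_indicator_eq_measureReal_mul_setIntegral_cond {A S : Set Ω}
    (hA : MeasurableSet A) (hS : MeasurableSet S) (u : Ω → ℝ) :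
    ∫ ω in S, A.indicator u ω ∂P = P.real A * ∫ ω in S, u ω ∂P[|A] := by
  rw [setIntegral_indicator hA]
  by_cases hPA : P A = 0
  · rw [Measure.real, hPA, ENNReal.toReal_zero, zero_mul,
      setIntegral_measure_zero _ (measure_mono_null inter_subset_right hPA)]
  rw [ProbabilityTheory.cond, Measure.restrict_smul, integral_smul_measure,
    Measure.restrict_restrict hS, smul_eq_mul, ← mul_assoc, ENNReal.toReal_inv,
    Measure.real, mul_inv_cancel₀ (ENNReal.toReal_ne_zero.mpr ⟨hPA, measure_ne_top P A⟩),
    one_mul]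

lemma integral_mul_condExp_of_stronglyMeasurable_left (hm : m ≤ mΩ) {f χ : Ω → ℝ}
    (hf : StronglyMeasurable[m] f) (hfχ : Integrable (f * χ) P) (hχ : Integrable χ P) :
    ∫ ω, f ω * P[χ|m] ω ∂P = ∫ ω, f ω * χ ω ∂P := by
  calc ∫ ω, f ω * P[χ|m] ω ∂P = ∫ ω, P[f * χ|m] ω ∂P :=
        integral_congr_ae (condExp_mul_of_stronglyMeasurable_left hf hfχ hχ).symm
    _ = ∫ ω, f ω * χ ω ∂P := integral_condExp hm

lemma condExp_indicator_condExp_cond (hm : m ≤ mΩ) {A : Set Ω} (hA : MeasurableSet A)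
    {Z : Ω → ℝ} (hZ : IntegrableOn Z A P) :
    P[A.indicator ((P[|A])[Z|m])|m] =ᵐ[P] P[A.indicator Z|m] := by
  have hkA : IntegrableOn ((P[|A])[Z|m]) A P := integrable_cond_iff.1 integrable_condExp
  refine ae_eq_condExp_of_forall_setIntegral_eq hm ((integrable_indicator_iff hA).2 hZ)
    (fun _ _ _ => integrable_condExp.integrableOn) (fun S hS _ => ?_)
    stronglyMeasurable_condExp.aestronglyMeasurable
  rw [setIntegral_condExp hm ((integrable_indicator_iff hA).2 hkA) hS,
    setIntegral_indicator_eq_measureReal_mul_setIntegral_cond hA (hm S hS),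
    setIntegral_indicator_eq_measureReal_mul_setIntegral_cond hA (hm S hS),
    setIntegral_condExp hm (integrable_cond_iff.2 hZ) hS]

lemma condExp_cond_mul_condExp_indicator (hm : m ≤ mΩ) {A : Set Ω} (hA : MeasurableSet A)
    {Z : Ω → ℝ} (hZ : IntegrableOn Z A P) :
    (P[|A])[Z|m] * P[A.indicator 1|m] =ᵐ[P] P[A.indicator Z|m] := by
  have hk : (P[|A])[Z|m] * A.indicator 1 = A.indicator ((P[|A])[Z|m]) := by
    ext ω
    by_cases hω : ω ∈ A <;> simp [hω]
  have hkA : Integrable (A.indicator ((P[|A])[Z|m])) P :=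
    (integrable_indicator_iff hA).2 (integrable_cond_iff.1 integrable_condExp)
  refine (condExp_mul_of_stronglyMeasurable_left stronglyMeasurable_condExp (hk ▸ hkA)
    ((integrable_const 1).indicator hA)).symm.trans ?_
  rw [hk]
  exact condExp_indicator_condExp_cond hm hA hZ

lemma measure_inter_eq_zero_iff_condExp_indicator (hm : m ≤ mΩ) {A N : Set Ω}
    (hA : MeasurableSet A) (hN : MeasurableSet[m] N) :
    P (A ∩ N) = 0 ↔ P[A.indicator (1 : Ω → ℝ)|m] =ᵐ[P.restrict N] 0 := by
  have hint : ∫ ω in N, P[A.indicator 1|m] ω ∂P = P.real (A ∩ N) := by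
    rw [setIntegral_condExp hm ((integrable_const 1).indicator hA) hN,
      integral_indicator_one hA, measureReal_restrict_apply hA]
  have hnonneg : 0 ≤ᵐ[P.restrict N] P[A.indicator 1|m] :=
    ae_restrict_of_ae (condExp_nonneg (ae_of_all _ (indicator_nonneg fun _ _ => zero_le_one (α := ℝ))))
  rw [← setIntegral_eq_zero_iff_of_nonneg_ae hnonneg integrable_condExp.integrableOn, hint,
    measureReal_eq_zero_iff]

lemma ae_cond_eq_condExp_cond_iff (hm : m ≤ mΩ) {A : Set Ω} (hA : MeasurableSet A)
    {Z h : Ω → ℝ} (hZ : IntegrableOn Z A P) (hh : Measurable[m] h) :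
    h =ᵐ[P[|A]] (P[|A])[Z|m] ↔ h * P[A.indicator 1|m] =ᵐ[P] P[A.indicator Z|m] := by
  set k := (P[|A])[Z|m]
  set N := {ω | h ω ≠ k ω}
  have hN : MeasurableSet[m] N :=
    (measurableSet_eq_fun hh stronglyMeasurable_condExp.measurable).compl
  have hkA := condExp_cond_mul_condExp_indicator hm hA hZ
  calc h =ᵐ[P[|A]] k ↔ P (A ∩ N) = 0 := by
        rw [EventuallyEq, ae_iff, cond_apply hA, mul_eq_zero, ENNReal.inv_eq_zero]
        simp [N, measure_ne_top]
    _ ↔ P[A.indicator 1|m] =ᵐ[P.restrict N] 0 :=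
        measure_inter_eq_zero_iff_condExp_indicator hm hA hN
    _ ↔ h * P[A.indicator 1|m] =ᵐ[P] k * P[A.indicator 1|m] := by
        rw [EventuallyEq, ae_restrict_iff' (hm N hN)]
        refine eventually_congr (ae_of_all _ fun ω => ?_)
        simp only [N, mem_ofPred_eq, Pi.mul_apply, Pi.zero_apply, mul_eq_mul_right_iff]
        tauto
    _ ↔ h * P[A.indicator 1|m] =ᵐ[P] P[A.indicator Z|m] :=
        ⟨fun H => H.trans hkA, fun H => H.trans hkA.symm⟩

lemma condExp_indicator_eq_odds_mul (hm : m ≤ mΩ) {A B : Set Ω} (hA : MeasurableSet A)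
    (hB : MeasurableSet B) (hAB : Disjoint A B) {p : Ω → ℝ} (hp : Measurable[m] p)
    (hpver : p =ᵐ[P[|A ∪ B]] (P[|A ∪ B])[A.indicator 1|m]) (hp1 : ∀ᵐ ω ∂P, p ω ≠ 1) :
    P[A.indicator 1|m] =ᵐ[P] (fun ω => p ω / (1 - p ω)) * P[B.indicator 1|m] := by
  have hscore := (ae_cond_eq_condExp_cond_iff hm (hA.union hB) (Z := A.indicator 1)
    ((integrable_const 1).indicator hA).integrableOn hp).1 hpver
  rw [indicator_indicator, inter_eq_right.2 subset_union_left] at hscore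
  have hunion : P[(A ∪ B).indicator (1 : Ω → ℝ)|m]
      =ᵐ[P] P[A.indicator 1|m] + P[B.indicator 1|m] := by
    rw [indicator_union_of_disjoint hAB]
    exact condExp_add ((integrable_const 1).indicator hA) ((integrable_const 1).indicator hB) m
  filter_upwards [hscore, hunion, hp1] with ω hscoreω hunionω hp1ω
  simp only [Pi.mul_apply, Pi.add_apply] at hscoreω hunionω ⊢
  rw [hunionω] at hscoreω
  field_simp [sub_ne_zero.2 hp1ω.symm]
  linear_combination -hscoreω

lemma exists_common_condExp_cond_iff (hm : m ≤ mΩ) {A B : Set Ω} (hA : MeasurableSet A)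
    (hB : MeasurableSet B) {Z φ : Ω → ℝ} (hZ : Integrable Z P)
    (hodds : P[A.indicator 1|m] =ᵐ[P] φ * P[B.indicator 1|m]) :
    (∃ h, Measurable[m] h ∧ h =ᵐ[P[|A]] (P[|A])[Z|m] ∧ h =ᵐ[P[|B]] (P[|B])[Z|m]) ↔
      P[A.indicator Z|m] =ᵐ[P] φ * P[B.indicator Z|m] := by
  constructor
  · rintro ⟨h, hh, hhA, hhB⟩
    filter_upwards [(ae_cond_eq_condExp_cond_iff hm hA hZ.integrableOn hh).1 hhA,
      (ae_cond_eq_condExp_cond_iff hm hB hZ.integrableOn hh).1 hhB, hodds] with ω hAω hBω hoω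
    simp only [Pi.mul_apply] at hAω hBω hoω ⊢
    rw [← hAω, ← hBω, hoω]
    ring
  · intro hZAB
    have hk : Measurable[m] ((P[|B])[Z|m]) := stronglyMeasurable_condExp.measurable
    refine ⟨(P[|B])[Z|m], hk, (ae_cond_eq_condExp_cond_iff hm hA hZ.integrableOn hk).2 ?_,
      EventuallyEq.rfl⟩
    filter_upwards [hodds, condExp_cond_mul_condExp_indicator hm hB hZ.integrableOn, hZAB]
      with ω hoω hBω hZABω
    simp only [Pi.mul_apply] at hoω hBω hZABω ⊢
    rw [hoω, hZABω, ← hBω]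
    ring

lemma integral_mul_indicator_eq_measureReal (hm : m ≤ mΩ) {A B : Set Ω}
    (hA : MeasurableSet A) (hB : MeasurableSet B) {φ : Ω → ℝ} (hφ : StronglyMeasurable[m] φ)
    (hφB : Integrable (φ * B.indicator 1) P)
    (hodds : P[A.indicator 1|m] =ᵐ[P] φ * P[B.indicator 1|m]) :
    ∫ ω, φ ω * B.indicator 1 ω ∂P = P.real A := by
  calc ∫ ω, φ ω * B.indicator 1 ω ∂P = ∫ ω, φ ω * P[B.indicator 1|m] ω ∂P :=
        (integral_mul_condExp_of_stronglyMeasurable_left hm hφ hφB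
          ((integrable_const 1).indicator hB)).symm
    _ = ∫ ω, P[A.indicator 1|m] ω ∂P := integral_congr_ae hodds.symm
    _ = P.real A := by rw [integral_condExp hm, integral_indicator_one hA]

theorem exists_common_condExp_cond_iff_weighted_condExp_eq_zero (hm : m ≤ mΩ) {A B : Set Ω}
    (hA : MeasurableSet A) (hB : MeasurableSet B) (hAB : Disjoint A B) (hPA : P A ≠ 0)
    {Z p : Ω → ℝ} (hZ : Integrable Z P) (hp : Measurable[m] p)
    (hpver : p =ᵐ[P[|A ∪ B]] (P[|A ∪ B])[A.indicator 1|m]) {ε : ℝ} (hε : 0 < ε)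
    (hoverlap : ∀ᵐ ω ∂P, 0 ≤ p ω ∧ p ω ≤ 1 - ε) :
    (∃ h, Measurable[m] h ∧ h =ᵐ[P[|A]] (P[|A])[Z|m] ∧ h =ᵐ[P[|B]] (P[|B])[Z|m]) ↔
      P[fun ω => (A.indicator 1 ω / (∫ ω', A.indicator 1 ω' ∂P) -
          (p ω * B.indicator 1 ω / (1 - p ω)) /
            (∫ ω', p ω' * B.indicator 1 ω' / (1 - p ω') ∂P)) * Z ω|m] =ᵐ[P] 0 := by
  set φ : Ω → ℝ := fun ω => p ω / (1 - p ω)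
  have hφ : StronglyMeasurable[m] φ := (hp.div (measurable_const.sub hp)).stronglyMeasurable
  have hp' : Measurable p := hp.mono hm le_rfl
  have hodds := condExp_indicator_eq_odds_mul hm hA hB hAB hp hpver
    (hoverlap.mono fun ω hω => by linarith [hω.2])
  have hφB : ∀ ω, p ω * B.indicator 1 ω / (1 - p ω) = φ ω * B.indicator 1 ω := fun ω => by
    ring
  have hweight_B : ∫ ω, φ ω * B.indicator 1 ω ∂P = P.real A :=
    integral_mul_indicator_eq_measureReal hm hA hB hφ
      (integrable_odds_mul hp' ((integrable_const 1).indicator hB) hε hoverlap) hodds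
  simp only [hφB, hweight_B, integral_indicator_one hA]
  rw [condExp_weighted_ae_eq_zero_iff hA hB ((measureReal_ne_zero_iff).2 hPA) hφ hZ
    (integrable_odds_mul hp' (hZ.indicator hB) hε hoverlap)]
  exact exists_common_condExp_cond_iff hm hA hB hZ hodds

end CondExpOnEvent

theorem pretrends_iff_weighted_conditional_moment_general
    {Ω : Type*} [MeasurableSpace Ω] (P : Measure Ω) [IsProbabilityMeasure P]
    (k T : ℕ)
    -- observed outcomes, covariates, group/control indicators
    (Y : ℕ → Ω → ℝ) (X : Ω → (Fin k → ℝ)) (G : ℕ → Ω → ℝ) (C : Ω → ℝ)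
    -- measurability and integrability
    (hYint : ∀ s, Integrable (Y s) P)
    (hXmeas : Measurable X) (hGmeas : ∀ g, Measurable (G g)) (hCmeas : Measurable C)
    -- indicator structure
    (hG01 : ∀ g ω, G g ω = 0 ∨ G g ω = 1)
    (hC01 : ∀ ω, C ω = 0 ∨ C ω = 1)
    (hsum : ∀ ω, (∑ g ∈ Finset.Icc 2 T, G g ω) + C ω = 1)
    -- the pair (g, t): a pre-treatment period, 2 ≤ t < g ≤ T
    (g t : ℕ) (ht : 2 ≤ t) (htg : t < g) (hgT : g ≤ T)
    (hPg : 0 < P {ω | G g ω = 1})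
    -- the generalized propensity score: a σ(X)-measurable version of E[G_g | X, G_g + C = 1]
    (p : Ω → ℝ)
    (hpmeas : Measurable[MeasurableSpace.comap X inferInstance] p)
    (hpver : p =ᵐ[P[|{ω | G g ω + C ω = 1}]]
      (P[|{ω | G g ω + C ω = 1}])[G g | MeasurableSpace.comap X inferInstance])
    -- overlap
    (ε : ℝ) (hε : 0 < ε)
    (hoverlap : ∀ᵐ ω ∂P, 0 ≤ p ω ∧ p ω ≤ 1 - ε) :
    -- the conditional pre-trends null hypothesis: there is a common version of
    -- E[Y_t − Y_{t−1} | X, G_g = 1] and E[Y_t − Y_{t−1} | X, C = 1]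
    (∃ m : (Fin k → ℝ) → ℝ, Measurable m ∧
      (fun ω => m (X ω)) =ᵐ[P[|{ω | G g ω = 1}]]
        (P[|{ω | G g ω = 1}])[fun ω => Y t ω - Y (t - 1) ω |
          MeasurableSpace.comap X inferInstance] ∧
      (fun ω => m (X ω)) =ᵐ[P[|{ω | C ω = 1}]]
        (P[|{ω | C ω = 1}])[fun ω => Y t ω - Y (t - 1) ω |
          MeasurableSpace.comap X inferInstance])
    ↔
    -- the weighted conditional moment restriction under the full measure P
    (P[fun ω =>
        (G g ω / (∫ ω', G g ω' ∂P) -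
          (p ω * C ω / (1 - p ω)) / (∫ ω', p ω' * C ω' / (1 - p ω') ∂P)) *
        (Y t ω - Y (t - 1) ω) |
      MeasurableSpace.comap X inferInstance]) =ᵐ[P] 0 := by
  have hdisj : Disjoint {ω | G g ω = 1} {ω | C ω = 1} :=
    disjoint_setOf_eq_one_of_sum_add_eq_one (Finset.mem_Icc.2 ⟨ht.trans htg.le, hgT⟩)
      (fun i ω => by rcases hG01 i ω with h | h <;> simp [h]) hsum
  have hAg : MeasurableSet {ω | G g ω = 1} := hGmeas g (measurableSet_singleton 1)
  have hAc : MeasurableSet {ω | C ω = 1} := hCmeas (measurableSet_singleton 1)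
  rw [setOf_add_eq_one_eq_union (hG01 g) hC01 hdisj] at hpver
  set Ag := {ω | G g ω = 1} with hAg_def
  set Ac := {ω | C ω = 1} with hAc_def
  -- opaque sets, so that rewriting `G g` and `C` below does not reach inside them
  clear_value Ag Ac
  have hGg : G g = Ag.indicator 1 := hAg_def ▸ eq_indicator_setOf_eq_one (hG01 g)
  have hC : C = Ac.indicator 1 := hAc_def ▸ eq_indicator_setOf_eq_one hC01
  rw [hGg] at hpver
  rw [hGg, hC, ← exists_common_condExp_cond_iff_weighted_condExp_eq_zero hXmeas.comap_le
    hAg hAc hdisj hPg.ne' (Z := fun ω => Y t ω - Y (t - 1) ω) ((hYint t).sub (hYint (t - 1)))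
    hpmeas hpver hε hoverlap]
  symm
  exact exists_measurable_comp_iff

/-- equivalence of the conditional pre-trends null and the weighted
conditional moment restriction.  Under overlap, for `2 ≤ t < g ≤ T`, the null
`E[Y_t − Y_{t−1} | X, G_g = 1] = E[Y_t − Y_{t−1} | X, C = 1]` (`P(·|G_g=1)`-a.s.)
holds if and only if `E[(w_g^G − w_g^C)(Y_t − Y_{t−1}) | σ(X)] = 0` `P`-a.s. -/
theorem pretrends_iff_weighted_conditional_moment
    {Ω : Type*} [MeasurableSpace Ω] (P : Measure Ω) [IsProbabilityMeasure P]
    (k T : ℕ) (hT : 2 ≤ T)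
    -- observed outcomes, covariates, group/control indicators
    (Y : ℕ → Ω → ℝ) (X : Ω → (Fin k → ℝ)) (G : ℕ → Ω → ℝ) (C : Ω → ℝ)
    -- measurability and integrability
    (hYmeas : ∀ s, Measurable (Y s)) (hYint : ∀ s, Integrable (Y s) P)
    (hXmeas : Measurable X) (hGmeas : ∀ g, Measurable (G g)) (hCmeas : Measurable C)
    -- indicator structure
    (hG01 : ∀ g ω, G g ω = 0 ∨ G g ω = 1)
    (hC01 : ∀ ω, C ω = 0 ∨ C ω = 1)
    (hsum : ∀ ω, (∑ g ∈ Finset.Icc 2 T, G g ω) + C ω = 1)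
    -- the pair (g, t): a pre-treatment period, 2 ≤ t < g ≤ T
    (g t : ℕ) (ht : 2 ≤ t) (htg : t < g) (hgT : g ≤ T)
    (hPg : 0 < P {ω | G g ω = 1}) (hPC : 0 < P {ω | C ω = 1})
    -- the generalized propensity score: a σ(X)-measurable version of E[G_g | X, G_g + C = 1]
    (p : Ω → ℝ)
    (hpmeas : Measurable[MeasurableSpace.comap X inferInstance] p)
    (hpver : p =ᵐ[P[|{ω | G g ω + C ω = 1}]]
      (P[|{ω | G g ω + C ω = 1}])[G g | MeasurableSpace.comap X inferInstance])
    -- overlap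
    (ε : ℝ) (hε : 0 < ε)
    (hoverlap : ∀ᵐ ω ∂P, 0 ≤ p ω ∧ p ω ≤ 1 - ε) :
    -- the conditional pre-trends null hypothesis: there is a common version of
    -- E[Y_t − Y_{t−1} | X, G_g = 1] and E[Y_t − Y_{t−1} | X, C = 1]
    (∃ m : (Fin k → ℝ) → ℝ, Measurable m ∧
      (fun ω => m (X ω)) =ᵐ[P[|{ω | G g ω = 1}]]
        (P[|{ω | G g ω = 1}])[fun ω => Y t ω - Y (t - 1) ω |
          MeasurableSpace.comap X inferInstance] ∧
      (fun ω => m (X ω)) =ᵐ[P[|{ω | C ω = 1}]]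
        (P[|{ω | C ω = 1}])[fun ω => Y t ω - Y (t - 1) ω |
          MeasurableSpace.comap X inferInstance])
    ↔
    -- the weighted conditional moment restriction under the full measure P
    (P[fun ω =>
        (G g ω / (∫ ω', G g ω' ∂P) -
          (p ω * C ω / (1 - p ω)) / (∫ ω', p ω' * C ω' / (1 - p ω') ∂P)) *
        (Y t ω - Y (t - 1) ω) |
      MeasurableSpace.comap X inferInstance]) =ᵐ[P] 0 :=
  pretrends_iff_weighted_conditional_moment_general P k T Y X G C hYint hXmeas hGmeas hCmeas hG01
    hC01 hsum g t ht htg hgT hPg p hpmeas hpver ε hε hoverlap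
end
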